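/- arXiv:2007.15431 — 5 statements merged into one kernel-verified Lean document; each statement's English description precedes it below -/
import Mathlib

section
/- Let Ω ⊆ ℝⁿ be an open bounded set, let p ≥ 2, and let σ : Ω × [0,∞) → ℝ satisfy (H1)–(H4). Let u, φ : ℝⁿ → ℝ be weakly differentiable functions whose gradients restricted to Ω belong to L²(Ω) ∩ L^p(Ω). Then the Gâteaux derivative of the Dirichlet energy F_σ at u in the direction φ exists and equals the weighted Dirichlet pairing: lim_{ε→0} (F_σ(u + εφ) − F_σ(u))/ε = ∫_Ω σ(x,|∇u(x)|) ∇u(x)·∇φ(x) dx. (Proposition 3.2.) -/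
open MeasureTheory Set Filter
open scoped RealInnerProductSpace Topology

/-- The Dirichlet energy density `Q_σ(x,E) = ∫₀^E σ(x,ξ)·ξ dξ`. -/
noncomputable def dirichletDensity {n : ℕ}
    (σ : EuclideanSpace ℝ (Fin n) → ℝ → ℝ) (x : EuclideanSpace ℝ (Fin n)) (E : ℝ) : ℝ :=
  ∫ ξ in (0:ℝ)..E, σ x ξ * ξ

/-- The Dirichlet energy `F_σ(u) = ∫_Ω Q_σ(x,|∇u(x)|) dx`. -/
noncomputable def dirichletEnergy {n : ℕ} (Ω : Set (EuclideanSpace ℝ (Fin n)))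
    (σ : EuclideanSpace ℝ (Fin n) → ℝ → ℝ) (u : EuclideanSpace ℝ (Fin n) → ℝ) : ℝ :=
  ∫ x in Ω, dirichletDensity σ x ‖gradient u x‖

/-!
Differentiation under the integral sign. For a.e. `x`, the map `ε ↦ Q_σ(x, |∇u + ε ∇φ|)` has
derivative `σ(x, |∇u|) ∇u · ∇φ` at `0` by the fundamental theorem of calculus, and for `|ε| < 1`
it is Lipschitz with constant `σ̄ max{1, (R/E₀)^(p-2)} R²`, where `R = |∇u| + |∇φ|`; this constant
is integrable because `R ∈ L² ∩ Lᵖ`. Measurability of `x ↦ Q_σ(x, E(x))` comes from `σ` being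
measurable in `x` and continuous in `E` (a Carathéodory function).
-/

section Caratheodory

variable {X : Type*} [MeasurableSpace X] {μ : Measure X} {σ : X → ℝ → ℝ}

theorem exists_measurable_nonneg_ae_eq {v : X → ℝ} (hv : AEMeasurable v μ)
    (hv0 : ∀ x, 0 ≤ v x) : ∃ w : X → ℝ, Measurable w ∧ (∀ x, 0 ≤ w x) ∧ w =ᵐ[μ] v := by
  refine ⟨fun x => max (hv.mk v x) 0, hv.measurable_mk.max measurable_const,
    fun x => le_max_right _ _, ?_⟩
  filter_upwards [hv.ae_eq_mk] with x hx
  rw [← hx, max_eq_left (hv0 x)]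

theorem aemeasurable_comp_of_continuousOn_Ici
    (hm : ∀ E : ℝ, 0 ≤ E → AEMeasurable (fun x => σ x E) μ)
    (hc : ∀ᵐ x ∂μ, ContinuousOn (σ x) (Ici 0))
    {v : X → ℝ} (hv : AEMeasurable v μ) (hv0 : ∀ x, 0 ≤ v x) :
    AEMeasurable (fun x => σ x (v x)) μ := by
  -- `σ x (v x)` is the a.e. limit of `σ x (⌈k v x⌉₊ / k)`, a countable patchwork of
  -- measurable representatives of the sections `σ · (m / k)`.
  set S : ℕ → X → ℕ → ℝ := fun k x m => (hm ((m : ℝ) / k) (by positivity)).mk _ x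
  have hS : ∀ k, Measurable (S k) := fun k =>
    measurable_pi_iff.2 fun m => (hm ((m : ℝ) / k) (by positivity)).measurable_mk
  have hSae : ∀ᵐ x ∂μ, ∀ k m : ℕ, S k x m = σ x ((m : ℝ) / k) := by
    simp only [ae_all_iff]
    exact fun k m => (hm ((m : ℝ) / k) (by positivity)).ae_eq_mk.symm
  obtain ⟨w, hw, hw0, hwv⟩ := exists_measurable_nonneg_ae_eq hv hv0
  have heval : Measurable fun q : (ℕ → ℝ) × ℕ => q.1 q.2 :=
    measurable_from_prod_countable_left fun m => measurable_pi_apply m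
  refine aemeasurable_of_tendsto_metrizable_ae atTop
    (f := fun k x => S k x ⌈w x * k⌉₊)
    (fun k => (heval.comp ((hS k).prodMk (Nat.measurable_ceil.comp
      (hw.mul measurable_const)))).aemeasurable) ?_
  filter_upwards [hc, hSae, hwv] with x hcx hSx hwx
  simp only [hSx, ← hwx]
  refine (hcx (w x) (hw0 x)).tendsto.comp (tendsto_nhdsWithin_iff.2 ⟨?_, ?_⟩)
  · exact (tendsto_nat_ceil_mul_div_atTop (hw0 x)).comp tendsto_natCast_atTop_atTop
  · exact Eventually.of_forall fun k => mem_Ici.2 (by positivity)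

theorem aemeasurable_prod_max_zero_of_continuousOn_Ici
    (hm : ∀ E : ℝ, 0 ≤ E → AEMeasurable (fun x => σ x E) μ)
    (hc : ∀ᵐ x ∂μ, ContinuousOn (σ x) (Ici 0)) (ν : Measure ℝ) :
    AEMeasurable (fun q : X × ℝ => σ q.1 (max q.2 0)) (μ.prod ν) :=
  aemeasurable_comp_of_continuousOn_Ici
    (fun E hE => (hm E hE).comp_quasiMeasurePreserving Measure.quasiMeasurePreserving_fst)
    (Measure.quasiMeasurePreserving_fst.ae hc)
    (measurable_snd.max measurable_const).aemeasurable fun _ => le_max_right _ _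

theorem aestronglyMeasurable_intervalIntegral_mul_id [SFinite μ]
    (hm : ∀ E : ℝ, 0 ≤ E → AEMeasurable (fun x => σ x E) μ)
    (hc : ∀ᵐ x ∂μ, ContinuousOn (σ x) (Ici 0))
    {v : X → ℝ} (hv : AEMeasurable v μ) (hv0 : ∀ x, 0 ≤ v x) :
    AEStronglyMeasurable (fun x => ∫ ξ in (0:ℝ)..v x, σ x ξ * ξ) μ := by
  obtain ⟨w, hw, hw0, hwv⟩ := exists_measurable_nonneg_ae_eq hv hv0
  have hset : MeasurableSet {q : X × ℝ | q.2 ∈ Ioc 0 (w q.1)} :=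
    (measurableSet_lt measurable_const measurable_snd).inter
      (measurableSet_le measurable_snd (hw.comp measurable_fst))
  have hF := (((aemeasurable_prod_max_zero_of_continuousOn_Ici hm hc volume).mul
    measurable_snd.aemeasurable).indicator hset).aestronglyMeasurable
  refine hF.integral_prod_right'.congr ?_
  filter_upwards [hwv] with x hx
  rw [← hx, intervalIntegral.integral_of_le (hw0 x),
    ← integral_indicator measurableSet_Ioc]
  congr 1 with ξ
  by_cases hξ : ξ ∈ Ioc 0 (w x)
  · rw [indicator_of_mem (s := {q : X × ℝ | q.2 ∈ Ioc 0 (w q.1)}) hξ, indicator_of_mem hξ,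
      Pi.mul_apply, max_eq_left hξ.1.le]
  · rw [indicator_of_notMem (s := {q : X × ℝ | q.2 ∈ Ioc 0 (w q.1)}) hξ, indicator_of_notMem hξ]

end Caratheodory

section Pointwise

variable {H : Type*} [NormedAddCommGroup H] [InnerProductSpace ℝ H] {g : ℝ → ℝ}

theorem abs_intervalIntegral_mul_id_sub_le (hg : ContinuousOn g (Ici 0)) {M R E₁ E₂ : ℝ}
    (hM : ∀ ξ ∈ Ioc 0 R, |g ξ| ≤ M) (h₁ : E₁ ∈ Icc 0 R) (h₂ : E₂ ∈ Icc 0 R) :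
    |(∫ ξ in (0:ℝ)..E₂, g ξ * ξ) - ∫ ξ in (0:ℝ)..E₁, g ξ * ξ| ≤ M * R * |E₂ - E₁| := by
  have hint : ∀ E ∈ Icc 0 R, IntervalIntegrable (fun ξ => g ξ * ξ) volume 0 E := fun E hE =>
    ((hg.mul continuousOn_id).mono
      (by simp [uIcc_of_le hE.1, Icc_subset_Ici_self])).intervalIntegrable
  rw [intervalIntegral.integral_interval_sub_left (hint _ h₂) (hint _ h₁)]
  have hbound : ∀ ξ ∈ uIoc E₁ E₂, ‖g ξ * ξ‖ ≤ M * R := fun ξ hξ => by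
    have hξR : ξ ∈ Ioc 0 R := ⟨(le_min h₁.1 h₂.1).trans_lt hξ.1, hξ.2.trans (max_le h₁.2 h₂.2)⟩
    rw [norm_mul, Real.norm_eq_abs, Real.norm_eq_abs, abs_of_pos hξR.1]
    exact mul_le_mul (hM ξ hξR) hξR.2 hξR.1.le ((abs_nonneg _).trans (hM ξ hξR))
  exact intervalIntegral.norm_integral_le_of_norm_le_const hbound

theorem abs_intervalIntegral_mul_id_le (hg : ContinuousOn g (Ici 0)) {M E : ℝ}
    (hM : ∀ ξ ∈ Ioc 0 E, |g ξ| ≤ M) (hE : 0 ≤ E) :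
    |∫ ξ in (0:ℝ)..E, g ξ * ξ| ≤ M * E ^ 2 := by
  simpa [abs_of_nonneg hE, sq, mul_assoc] using
    abs_intervalIntegral_mul_id_sub_le hg hM (left_mem_Icc.2 hE) (right_mem_Icc.2 hE)

theorem hasDerivAt_norm_add_smul {a : H} (ha : a ≠ 0) (b : H) :
    HasDerivAt (fun ε : ℝ => ‖a + ε • b‖) (⟪a, b⟫ / ‖a‖) 0 := by
  have hline : HasDerivAt (fun ε : ℝ => a + ε • b) b 0 := by
    simpa using ((hasDerivAt_id (0:ℝ)).smul_const b).const_add a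
  convert (hline.norm_sq.sqrt (by simpa using ha)) using 1
  · funext ε
    exact (Real.sqrt_sq (norm_nonneg _)).symm
  · simp only [zero_smul, add_zero, Real.sqrt_sq (norm_nonneg a)]
    exact (mul_div_mul_left _ _ two_ne_zero).symm

theorem hasDerivAt_intervalIntegral_mul_id_norm_add_smul (hg : ContinuousOn g (Ici 0))
    (a b : H) :
    HasDerivAt (fun ε : ℝ => ∫ ξ in (0:ℝ)..‖a + ε • b‖, g ξ * ξ) (g ‖a‖ * ⟪a, b⟫) 0 := by
  rcases eq_or_ne a 0 with rfl | ha
  · -- `g` is bounded near `0`, so the integral is `O(ε²)`.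
    obtain ⟨M, hM⟩ := isCompact_Icc.exists_bound_of_continuousOn
      (hg.mono (Icc_subset_Ici_self : Icc (0:ℝ) 1 ⊆ Ici 0))
    simp only [inner_zero_left, mul_zero, zero_add]
    rw [hasDerivAt_iff_isLittleO_nhds_zero]
    simp only [zero_add, zero_smul, norm_zero, intervalIntegral.integral_same, sub_zero,
      smul_zero]
    refine Asymptotics.IsBigO.trans_isLittleO ?_ (Asymptotics.isLittleO_pow_id one_lt_two)
    refine Asymptotics.IsBigO.of_bound (M * ‖b‖ ^ 2) ?_
    have hsmall : ∀ᶠ ε : ℝ in 𝓝 0, ‖ε • b‖ ≤ 1 := by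
      refine (Continuous.tendsto (by fun_prop) 0).eventually (ge_mem_nhds ?_)
      simp
    filter_upwards [hsmall] with ε hε
    have := abs_intervalIntegral_mul_id_le hg
      (fun ξ hξ => hM ξ ⟨hξ.1.le, hξ.2.trans hε⟩) (norm_nonneg (ε • b))
    simpa [norm_smul, mul_pow, mul_comm, mul_left_comm] using this
  · have hpos : 0 < ‖a‖ := norm_pos_iff.2 ha
    have hQ : HasDerivAt (fun E => ∫ ξ in (0:ℝ)..E, g ξ * ξ) (g ‖a‖ * ‖a‖) ‖a‖ := by
      have hcont := (hg.mul continuousOn_id).mono (Ioi_subset_Ici_self : Ioi (0:ℝ) ⊆ Ici 0)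
      refine intervalIntegral.integral_hasDerivAt_right ?_
        (hcont.stronglyMeasurableAtFilter isOpen_Ioi _ hpos)
        (hcont.continuousAt (Ioi_mem_nhds hpos))
      exact ((hg.mul continuousOn_id).mono
        (by simp [Icc_subset_Ici_self])).intervalIntegrable
    refine (hQ.comp_of_eq 0 (hasDerivAt_norm_add_smul ha b) (by simp)).congr_deriv ?_
    field_simp

theorem abs_intervalIntegral_mul_id_norm_add_smul_sub_le (hg : ContinuousOn g (Ici 0))
    {M : ℝ} {a b : H} (hM : ∀ ξ ∈ Ioc 0 (‖a‖ + ‖b‖), |g ξ| ≤ M) {ε ε' : ℝ}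
    (hε : |ε| ≤ 1) (hε' : |ε'| ≤ 1) :
    |(∫ ξ in (0:ℝ)..‖a + ε • b‖, g ξ * ξ) - ∫ ξ in (0:ℝ)..‖a + ε' • b‖, g ξ * ξ|
      ≤ M * (‖a‖ + ‖b‖) ^ 2 * |ε - ε'| := by
  have hmem : ∀ t : ℝ, |t| ≤ 1 → ‖a + t • b‖ ∈ Icc 0 (‖a‖ + ‖b‖) := fun t ht => by
    refine ⟨norm_nonneg _, (norm_add_le _ _).trans ?_⟩
    rw [norm_smul, Real.norm_eq_abs]
    gcongr
    exact mul_le_of_le_one_left (norm_nonneg b) ht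
  have hMR : 0 ≤ M * (‖a‖ + ‖b‖) := by
    rcases (by positivity : (0:ℝ) ≤ ‖a‖ + ‖b‖).eq_or_lt with h | h
    · rw [← h, mul_zero]
    · exact mul_nonneg ((abs_nonneg _).trans (hM _ ⟨h, le_rfl⟩)) h.le
  calc _ ≤ M * (‖a‖ + ‖b‖) * |‖a + ε • b‖ - ‖a + ε' • b‖| :=
        abs_intervalIntegral_mul_id_sub_le hg hM (hmem ε' hε') (hmem ε hε)
    _ ≤ M * (‖a‖ + ‖b‖) * ((‖a‖ + ‖b‖) * |ε - ε'|) := by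
        gcongr
        refine (abs_norm_sub_norm_le _ _).trans ?_
        rw [add_sub_add_left_eq_sub, ← sub_smul, norm_smul, Real.norm_eq_abs, mul_comm]
        gcongr
        exact le_add_of_nonneg_left (norm_nonneg a)
    _ = M * (‖a‖ + ‖b‖) ^ 2 * |ε - ε'| := by ring

end Pointwise

section Growth

noncomputable def powerGrowthBound (C E₀ q E : ℝ) : ℝ := C * max 1 ((E / E₀) ^ q)

theorem abs_le_powerGrowthBound {g : ℝ → ℝ} {C E₀ q R ξ : ℝ} (hC : 0 ≤ C) (hE₀ : 0 < E₀)
    (hq : 0 ≤ q) (hg : ∀ E > 0, 0 ≤ g E ∧ g E ≤ powerGrowthBound C E₀ q E)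
    (hξ : ξ ∈ Ioc 0 R) : |g ξ| ≤ powerGrowthBound C E₀ q R := by
  rw [abs_of_nonneg (hg ξ hξ.1).1]
  refine (hg ξ hξ.1).2.trans ?_
  exact mul_le_mul_of_nonneg_left (max_le_max le_rfl (Real.rpow_le_rpow
    (div_nonneg hξ.1.le hE₀.le) (div_le_div_of_nonneg_right hξ.2 hE₀.le) hq)) hC

theorem integrable_powerGrowthBound_mul_sq {X : Type*} [MeasurableSpace X] {μ : Measure X}
    {C E₀ p : ℝ} (hE₀ : 0 < E₀) (hp : 2 ≤ p) {r : X → ℝ} (hr0 : ∀ x, 0 ≤ r x)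
    (hr2 : MemLp r 2 μ) (hrp : MemLp r (ENNReal.ofReal p) μ) :
    Integrable (fun x => powerGrowthBound C E₀ (p - 2) (r x) * r x ^ 2) μ := by
  have hdom : Integrable (fun x => r x ^ 2 + E₀ ^ 2 * ‖r x / E₀‖ ^ p) μ := by
    refine hr2.integrable_sq.add (Integrable.const_mul ?_ _)
    simpa [ENNReal.toReal_ofReal (by linarith : 0 ≤ p), div_eq_mul_inv] using
      (hrp.mul_const E₀⁻¹).integrable_norm_rpow (by simp; linarith) ENNReal.ofReal_ne_top
  have hmeas : AEStronglyMeasurable (fun x => max 1 ((r x / E₀) ^ (p - 2)) * r x ^ 2) μ := by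
    have hr := hr2.aestronglyMeasurable.aemeasurable
    exact AEMeasurable.aestronglyMeasurable (by fun_prop)
  simp_rw [powerGrowthBound, mul_assoc]
  refine (hdom.mono' hmeas (Eventually.of_forall fun x => ?_)).const_mul C
  have hrE : 0 ≤ r x / E₀ := div_nonneg (hr0 x) hE₀.le
  have hsplit : (r x / E₀) ^ p = (r x / E₀) ^ (p - 2) * (r x / E₀) ^ 2 := by
    rw [← Real.rpow_natCast, ← Real.rpow_add' hrE (by norm_num; linarith)]
    norm_num
  rw [Real.norm_of_nonneg (by positivity), Real.norm_of_nonneg hrE, hsplit, div_pow]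
  calc max 1 ((r x / E₀) ^ (p - 2)) * r x ^ 2 ≤ (1 + (r x / E₀) ^ (p - 2)) * r x ^ 2 := by
        gcongr
        exact max_le (le_add_of_nonneg_right (by positivity)) (le_add_of_nonneg_left zero_le_one)
    _ = _ := by field_simp

end Growth

section Energy

variable {X H : Type*} [MeasurableSpace X] {μ : Measure X} [SFinite μ]
  [NormedAddCommGroup H] {σ : X → ℝ → ℝ} {C E₀ p : ℝ}

theorem integrable_intervalIntegral_mul_id_norm
    (hm : ∀ E : ℝ, 0 ≤ E → AEMeasurable (fun x => σ x E) μ)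
    (hc : ∀ᵐ x ∂μ, ContinuousOn (σ x) (Ici 0))
    (hσ : ∀ᵐ x ∂μ, ∀ E > 0, 0 ≤ σ x E ∧ σ x E ≤ powerGrowthBound C E₀ (p - 2) E)
    (hC : 0 ≤ C) (hE₀ : 0 < E₀) (hp : 2 ≤ p)
    {w : X → H} (hw2 : MemLp w 2 μ) (hwp : MemLp w (ENNReal.ofReal p) μ) :
    Integrable (fun x => ∫ ξ in (0:ℝ)..‖w x‖, σ x ξ * ξ) μ := by
  refine (integrable_powerGrowthBound_mul_sq (C := C) hE₀ hp (fun x => norm_nonneg (w x))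
    hw2.norm hwp.norm).mono' (aestronglyMeasurable_intervalIntegral_mul_id hm hc
      hw2.aestronglyMeasurable.norm.aemeasurable fun x => norm_nonneg _) ?_
  filter_upwards [hc, hσ] with x hcx hσx
  exact abs_intervalIntegral_mul_id_le hcx
    (fun ξ hξ => abs_le_powerGrowthBound hC hE₀ (by linarith) hσx hξ) (norm_nonneg _)

theorem hasDerivAt_integral_intervalIntegral_mul_id_norm_add_smul [InnerProductSpace ℝ H]
    (hm : ∀ E : ℝ, 0 ≤ E → AEMeasurable (fun x => σ x E) μ)
    (hc : ∀ᵐ x ∂μ, ContinuousOn (σ x) (Ici 0))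
    (hσ : ∀ᵐ x ∂μ, ∀ E > 0, 0 ≤ σ x E ∧ σ x E ≤ powerGrowthBound C E₀ (p - 2) E)
    (hC : 0 ≤ C) (hE₀ : 0 < E₀) (hp : 2 ≤ p) {a b : X → H}
    (ha2 : MemLp a 2 μ) (hap : MemLp a (ENNReal.ofReal p) μ)
    (hb2 : MemLp b 2 μ) (hbp : MemLp b (ENNReal.ofReal p) μ) :
    HasDerivAt (fun ε : ℝ => ∫ x, (∫ ξ in (0:ℝ)..‖a x + ε • b x‖, σ x ξ * ξ) ∂μ)
      (∫ x, σ x ‖a x‖ * ⟪a x, b x⟫ ∂μ) 0 := by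
  have ha := ha2.aestronglyMeasurable
  have hb := hb2.aestronglyMeasurable
  refine (hasDerivAt_integral_of_dominated_loc_of_lip (Metric.ball_mem_nhds 0 one_pos)
    (bound := fun x => powerGrowthBound C E₀ (p - 2) (‖a x‖ + ‖b x‖) * (‖a x‖ + ‖b x‖) ^ 2)
    ?_ ?_ ?_ ?_ ?_ ?_).2
  · exact Eventually.of_forall fun ε => aestronglyMeasurable_intervalIntegral_mul_id hm hc
      (ha.add (hb.const_smul ε)).norm.aemeasurable fun x => norm_nonneg _
  · simpa using integrable_intervalIntegral_mul_id_norm hm hc hσ hC hE₀ hp ha2 hap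
  · exact ((aemeasurable_comp_of_continuousOn_Ici hm hc ha.norm.aemeasurable
      fun x => norm_nonneg _).mul (ha.inner hb).aemeasurable).aestronglyMeasurable
  · filter_upwards [hc, hσ] with x hcx hσx
    refine LipschitzOnWith.of_dist_le_mul fun ε hε ε' hε' => ?_
    rw [Real.coe_nnabs, Real.dist_eq, Real.dist_eq]
    rw [mem_ball_zero_iff, Real.norm_eq_abs] at hε hε'
    exact (abs_intervalIntegral_mul_id_norm_add_smul_sub_le hcx
      (fun ξ hξ => abs_le_powerGrowthBound hC hE₀ (by linarith) hσx hξ) hε.le hε'.le).trans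
      (mul_le_mul_of_nonneg_right (le_abs_self _) (abs_nonneg _))
  · exact integrable_powerGrowthBound_mul_sq hE₀ hp (fun x => by positivity)
      (ha2.norm.add hb2.norm) (hap.norm.add hbp.norm)
  · filter_upwards [hc] with x hcx
    exact hasDerivAt_intervalIntegral_mul_id_norm_add_smul hcx (a x) (b x)

end Energy

theorem gradient_add_const_mul {F : Type*} [NormedAddCommGroup F] [InnerProductSpace ℝ F]
    [CompleteSpace F] {u φ : F → ℝ} {x : F} (hu : DifferentiableAt ℝ u x)
    (hφ : DifferentiableAt ℝ φ x) (c : ℝ) :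
    gradient (fun y => u y + c * φ y) x = gradient u x + c • gradient φ x := by
  refine HasGradientAt.gradient (hasGradientAt_iff_hasFDerivAt.2 ?_)
  rw [map_add, map_smul, toDual_gradient, toDual_gradient]
  exact hu.hasFDerivAt.add (hφ.hasFDerivAt.const_mul c)

theorem gateaux_derivative_dirichlet_energy_general
    {n : ℕ} (Ω : Set (EuclideanSpace ℝ (Fin n)))
    (p : ℝ) (hp : 2 ≤ p)
    (σ : EuclideanSpace ℝ (Fin n) → ℝ → ℝ)
    -- (H1) measurability in x
    (hσmeas : ∀ E : ℝ, 0 ≤ E → AEMeasurable (fun x => σ x E) (volume.restrict Ω))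
    -- (H3) continuity of E ↦ σ(x,E) on [0,∞)
    (hσcont : ∀ᵐ x ∂(volume.restrict Ω), ContinuousOn (fun E => σ x E) (Set.Ici 0))
    -- (H4) two-sided growth bound with exponent p
    (hσgrowth : ∃ σl σu E₀ : ℝ, 0 < σl ∧ σl ≤ σu ∧ 0 < E₀ ∧
      ∀ᵐ x ∂(volume.restrict Ω), ∀ E > (0:ℝ),
        σl * (E / E₀) ^ (p - 2) ≤ σ x E ∧ σ x E ≤ σu * max 1 ((E / E₀) ^ (p - 2)))
    -- u and φ weakly differentiable with gradients in L²(Ω) ∩ L^p(Ω)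
    (u φ : EuclideanSpace ℝ (Fin n) → ℝ)
    (hu : Differentiable ℝ u) (hφ : Differentiable ℝ φ)
    (huL2 : MemLp (fun x => gradient u x) 2 (volume.restrict Ω))
    (huLp : MemLp (fun x => gradient u x) (ENNReal.ofReal p) (volume.restrict Ω))
    (hφL2 : MemLp (fun x => gradient φ x) 2 (volume.restrict Ω))
    (hφLp : MemLp (fun x => gradient φ x) (ENNReal.ofReal p) (volume.restrict Ω)) :
    Tendsto (fun ε : ℝ =>
        (dirichletEnergy Ω σ (fun x => u x + ε * φ x) - dirichletEnergy Ω σ u) / ε)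
      (𝓝[≠] 0)
      (𝓝 (∫ x in Ω, σ x ‖gradient u x‖ * ⟪gradient u x, gradient φ x⟫)) := by
  obtain ⟨σl, σu, E₀, hσl, hσlu, hE₀, hgrowth⟩ := hσgrowth
  have hσ : ∀ᵐ x ∂(volume.restrict Ω),
      ∀ E > 0, 0 ≤ σ x E ∧ σ x E ≤ powerGrowthBound σu E₀ (p - 2) E := by
    filter_upwards [hgrowth] with x hx E hE
    exact ⟨(by positivity : 0 ≤ σl * (E / E₀) ^ (p - 2)).trans (hx E hE).1, (hx E hE).2⟩
  have hderiv := hasDerivAt_integral_intervalIntegral_mul_id_norm_add_smul hσmeas hσcont hσ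
    (hσl.le.trans hσlu) hE₀ hp huL2 huLp hφL2 hφLp
  rw [hasDerivAt_iff_tendsto_slope_zero] at hderiv
  refine hderiv.congr fun ε => ?_
  simp only [dirichletEnergy, dirichletDensity, fun x => gradient_add_const_mul (hu x) (hφ x) ε,
    zero_add, zero_smul, add_zero, smul_eq_mul, inv_mul_eq_div]

/-- **Gâteaux derivative of the Dirichlet energy** (Proposition 3.2):
`lim_{ε→0} (F_σ(u + εφ) − F_σ(u))/ε = ∫_Ω σ(x,|∇u|) ∇u·∇φ dx`. -/
theorem gateaux_derivative_dirichlet_energy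
    {n : ℕ} (Ω : Set (EuclideanSpace ℝ (Fin n)))
    (hΩo : IsOpen Ω) (hΩb : Bornology.IsBounded Ω)
    (p : ℝ) (hp : 2 ≤ p)
    (σ : EuclideanSpace ℝ (Fin n) → ℝ → ℝ)
    -- (H1) measurability in x
    (hσmeas : ∀ E : ℝ, 0 ≤ E → AEMeasurable (fun x => σ x E) (volume.restrict Ω))
    -- (H2) strict monotonicity of E ↦ σ(x,E)·E on (0,∞)
    (hσmono : ∀ᵐ x ∂(volume.restrict Ω), StrictMonoOn (fun E => σ x E * E) (Set.Ioi 0))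
    -- (H3) continuity of E ↦ σ(x,E) on [0,∞)
    (hσcont : ∀ᵐ x ∂(volume.restrict Ω), ContinuousOn (fun E => σ x E) (Set.Ici 0))
    -- (H4) two-sided growth bound with exponent p
    (hσgrowth : ∃ σl σu E₀ : ℝ, 0 < σl ∧ σl ≤ σu ∧ 0 < E₀ ∧
      ∀ᵐ x ∂(volume.restrict Ω), ∀ E > (0:ℝ),
        σl * (E / E₀) ^ (p - 2) ≤ σ x E ∧ σ x E ≤ σu * max 1 ((E / E₀) ^ (p - 2)))
    -- u and φ weakly differentiable with gradients in L²(Ω) ∩ L^p(Ω)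
    (u φ : EuclideanSpace ℝ (Fin n) → ℝ)
    (hu : Differentiable ℝ u) (hφ : Differentiable ℝ φ)
    (huL2 : MemLp (fun x => gradient u x) 2 (volume.restrict Ω))
    (huLp : MemLp (fun x => gradient u x) (ENNReal.ofReal p) (volume.restrict Ω))
    (hφL2 : MemLp (fun x => gradient φ x) 2 (volume.restrict Ω))
    (hφLp : MemLp (fun x => gradient φ x) (ENNReal.ofReal p) (volume.restrict Ω)) :
    Tendsto (fun ε : ℝ =>
        (dirichletEnergy Ω σ (fun x => u x + ε * φ x) - dirichletEnergy Ω σ u) / ε)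
      (𝓝[≠] 0)
      (𝓝 (∫ x in Ω, σ x ‖gradient u x‖ * ⟪gradient u x, gradient φ x⟫)) :=
  gateaux_derivative_dirichlet_energy_general Ω p hp σ hσmeas hσcont hσgrowth u φ hu hφ huL2 huLp
    hφL2 hφLp
end

section
/- Let Ω ⊆ ℝⁿ be an open bounded set, let p ≥ 2, and let σ : Ω × [0,∞) → ℝ satisfy (H1)–(H4). Let A be a set of weakly differentiable functions with gradients (restricted to Ω) in L²(Ω) ∩ L^p(Ω), let φ : ℝⁿ → ℝ be weakly differentiable with ∇φ ∈ L²(Ω) ∩ L^p(Ω), and for each ε ∈ (−1,1) let u_ε minimize the Dirichlet energy F_σ over the translated admissible class A_ε := {v + εφ : v ∈ A}. If ∇u_ε → ∇u₀ in L^p(Ω) as ε → 0, then lim_{ε→0} (F_σ(u_ε) − F_σ(u₀))/ε = ∫_Ω σ(x,|∇u₀(x)|) ∇u₀(x)·∇φ(x) dx. (Proposition 3.4: the Gâteaux derivative of the composed map f ↦ F_σ(u^f) with respect to the boundary datum equals the DtN pairing ⟨Λ_σ(f), φ⟩, written here with interior integrals and with the admissible class A in the role of {u ∈ W^{1,p}(Ω)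 : u|∂Ω = f}.) -/
open MeasureTheory Set Filter
open scoped RealInnerProductSpace Topology

/-!
Write `u_ε = v + εφ` with `v ∈ A`. Minimality of `u_ε` over `A_ε` and of `u₀` over `A` squeezes
`F(u_ε) − F(u₀)` between `F(u_ε) − F(u_ε − εφ)` and `F(u₀ + εφ) − F(u₀)`. Since `y ↦ Q_σ(x,|y|)` is
differentiable with gradient `σ(x,|y|) y`, each of these one-sided increments is `ε` times an average of
`σ(x,|∇w + tsφ|) (∇w + tsφ)·∇φ` over `t ∈ [0,1]`, with `(w, s) = (u₀, ε)` and `(u_ε, −ε)`. Both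
averages tend to `∫_Ω σ(x,|∇u₀|) ∇u₀·∇φ`: along a sequence `ε_k → 0`, a subsequence of `∇u_{ε_k}`
converges a.e. with a majorant in `Lᵖ`, and the growth bound `σ(x,E) E ≤ C (1 + E^{p−1})` turns it
into an integrable majorant for dominated convergence.
-/

open scoped ENNReal

theorem self_le_one_add_rpow {E q : ℝ} (hE : 0 ≤ E) (hq : 1 ≤ q) : E ≤ 1 + E ^ q := by
  rcases le_total E 1 with h | h
  · linarith [Real.rpow_nonneg hE q]
  · linarith [Real.self_le_rpow_of_one_le h hq]

theorem max_one_rpow_mul_le {p E₀ E : ℝ} (hp : 2 ≤ p) (hE₀ : 0 < E₀) (hE : 0 ≤ E) :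
    max 1 ((E / E₀) ^ (p - 2)) * E ≤ (1 + E₀ ^ (2 - p)) * (1 + E ^ (p - 1)) := by
  rcases hE.eq_or_lt with rfl | hE
  · simp only [mul_zero]; positivity
  have hpow : (E / E₀) ^ (p - 2) * E = E₀ ^ (2 - p) * E ^ (p - 1) := by
    rw [Real.div_rpow hE.le hE₀.le, show 2 - p = -(p - 2) by ring, Real.rpow_neg hE₀.le,
      show p - 1 = (p - 2) + 1 by ring, Real.rpow_add hE, Real.rpow_one]
    field_simp
  have hmax : max 1 ((E / E₀) ^ (p - 2)) ≤ 1 + (E / E₀) ^ (p - 2) :=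
    max_le (by linarith [Real.rpow_nonneg (div_nonneg hE.le hE₀.le) (p - 2)]) (by linarith)
  have hE1 := self_le_one_add_rpow hE.le (show 1 ≤ p - 1 by linarith)
  have hEp := Real.rpow_nonneg hE.le (p - 1)
  have hE₀p := Real.rpow_nonneg hE₀.le (2 - p)
  calc max 1 ((E / E₀) ^ (p - 2)) * E ≤ (1 + (E / E₀) ^ (p - 2)) * E := by gcongr
    _ = E + E₀ ^ (2 - p) * E ^ (p - 1) := by rw [add_mul, hpow, one_mul]
    _ ≤ (1 + E₀ ^ (2 - p)) * (1 + E ^ (p - 1)) := by nlinarith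

theorem ae_growth_of_two_sided_bound {X : Type*} [MeasurableSpace X] {μ : Measure X}
    {σ : X → ℝ → ℝ} {p σl σu E₀ : ℝ} (hp : 2 ≤ p) (hσl : 0 ≤ σl) (hσu : 0 ≤ σu)
    (hE₀ : 0 < E₀)
    (hσ : ∀ᵐ x ∂μ, ∀ E > (0:ℝ),
      σl * (E / E₀) ^ (p - 2) ≤ σ x E ∧ σ x E ≤ σu * max 1 ((E / E₀) ^ (p - 2))) :
    ∀ᵐ x ∂μ, ∀ E > (0:ℝ),
      0 ≤ σ x E ∧ σ x E * E ≤ σu * (1 + E₀ ^ (2 - p)) * (1 + E ^ (p - 1)) := by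
  filter_upwards [hσ] with x hx E hE
  obtain ⟨hlow, hupp⟩ := hx E hE
  refine ⟨le_trans (by positivity) hlow, ?_⟩
  calc σ x E * E ≤ σu * max 1 ((E / E₀) ^ (p - 2)) * E := by gcongr
    _ ≤ σu * ((1 + E₀ ^ (2 - p)) * (1 + E ^ (p - 1))) := by
      rw [mul_assoc]; exact mul_le_mul_of_nonneg_left (max_one_rpow_mul_le hp hE₀ hE.le) hσu
    _ = σu * (1 + E₀ ^ (2 - p)) * (1 + E ^ (p - 1)) := (mul_assoc ..).symm

section SegmentFlux

variable {E : Type*} [NormedAddCommGroup E] [InnerProductSpace ℝ E] {s : ℝ → ℝ} {C p : ℝ}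

noncomputable def segmentFlux (s : ℝ → ℝ) (a ψ : E) (r : ℝ) : ℝ :=
  ∫ t in (0:ℝ)..1, s ‖a + (t * r) • ψ‖ * ⟪a + (t * r) • ψ, ψ⟫

theorem segmentFlux_zero (s : ℝ → ℝ) (a ψ : E) : segmentFlux s a ψ 0 = s ‖a‖ * ⟪a, ψ⟫ := by
  simp [segmentFlux]

theorem continuous_segmentFlux (hs : ContinuousOn s (Ici 0)) (ψ : E) :
    Continuous fun q : E × ℝ => segmentFlux s q.1 ψ q.2 := by
  have hY : Continuous fun z : (E × ℝ) × ℝ => z.1.1 + (z.2 * z.1.2) • ψ := by fun_prop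
  exact intervalIntegral.continuous_parametric_intervalIntegral_of_continuous'
    ((hs.comp_continuous hY.norm fun _ => norm_nonneg _).mul (hY.inner continuous_const)) 0 1

theorem hasFDerivAt_integral_norm (hs : ContinuousOn s (Ici 0)) (y : E) :
    HasFDerivAt (fun z : E => ∫ ξ in (0:ℝ)..‖z‖, s ξ * ξ) (s ‖y‖ • innerSL ℝ y) y := by
  have hcont : ContinuousOn (fun ξ => s ξ * ξ) (Ici 0) := hs.mul continuousOn_id
  rcases eq_or_ne y 0 with rfl | hy
  · -- `∫₀^E s(ξ) ξ dξ = o(E)` as `E → 0⁺`, because the integrand vanishes at `0`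
    have hQ : HasDerivWithinAt (fun E => ∫ ξ in (0:ℝ)..E, s ξ * ξ) (s 0 * 0) (Ici 0) 0 :=
      intervalIntegral.integral_hasDerivWithinAt_right
        (hcont.mono Icc_subset_Ici_self |>.intervalIntegrable_of_Icc le_rfl)
        ⟨Ioi 0, self_mem_nhdsWithin,
          (hcont.mono Ioi_subset_Ici_self).aestronglyMeasurable measurableSet_Ioi⟩
        ((hcont.continuousWithinAt self_mem_Ici).mono Ioi_subset_Ici_self)
    have hnorm : Tendsto (fun z : E => ‖z‖) (𝓝 0) (𝓝[Ici 0] 0) :=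
      tendsto_nhdsWithin_iff.2 ⟨by simpa using (continuous_norm.tendsto (0 : E)),
        Eventually.of_forall fun z => norm_nonneg z⟩
    rw [hasFDerivAt_iff_isLittleO_nhds_zero]
    have hQo : (fun z : E => ∫ ξ in (0:ℝ)..‖z‖, s ξ * ξ) =o[𝓝 0] fun z => ‖z‖ := by
      simpa [Function.comp_def] using (hasDerivWithinAt_iff_isLittleO.1 hQ).comp_tendsto hnorm
    simpa using Asymptotics.isLittleO_norm_right.mp hQo
  · have hy' : 0 < ‖y‖ := norm_pos_iff.2 hy
    have hQ : HasDerivAt (fun E => ∫ ξ in (0:ℝ)..E, s ξ * ξ) (s ‖y‖ * ‖y‖) ‖y‖ :=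
      intervalIntegral.integral_hasDerivAt_right
        (hcont.mono (by simp [Icc_subset_Ici_self]) |>.intervalIntegrable)
        ⟨Ioi 0, Ioi_mem_nhds hy', (hcont.mono Ioi_subset_Ici_self).aestronglyMeasurable
          measurableSet_Ioi⟩
        (hcont.continuousAt (Ici_mem_nhds hy'))
    have hnorm : HasFDerivAt (fun z : E => ‖z‖) (‖y‖⁻¹ • innerSL ℝ y) y := by
      have h := (hasStrictFDerivAt_norm_sq y).hasFDerivAt.sqrt (by positivity)
      simp only [Real.sqrt_sq (norm_nonneg _)] at h
      convert h using 1
      ext v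
      simp
      ring
    have hL : (s ‖y‖ * ‖y‖) • (‖y‖⁻¹ • innerSL ℝ y) = s ‖y‖ • innerSL ℝ y := by
      rw [smul_smul, mul_assoc, mul_inv_cancel₀ hy'.ne', mul_one]
    rw [← hL]
    exact hQ.comp_hasFDerivAt y hnorm

theorem integral_norm_add_smul_sub (hs : ContinuousOn s (Ici 0)) (a ψ : E) (r : ℝ) :
    (∫ ξ in (0:ℝ)..‖a + r • ψ‖, s ξ * ξ) - (∫ ξ in (0:ℝ)..‖a‖, s ξ * ξ) =
      r * segmentFlux s a ψ r := by
  have hline : ∀ t : ℝ, HasDerivAt (fun t : ℝ => a + (t * r) • ψ) (r • ψ) t := fun t => by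
    simpa using ((hasDerivAt_mul_const r).smul_const ψ).const_add a
  have hderiv : ∀ t : ℝ, HasDerivAt (fun t : ℝ => ∫ ξ in (0:ℝ)..‖a + (t * r) • ψ‖, s ξ * ξ)
      (r * (s ‖a + (t * r) • ψ‖ * ⟪a + (t * r) • ψ, ψ⟫)) t := fun t => by
    refine ((hasFDerivAt_integral_norm hs _).comp_hasDerivAt t (hline t)).congr_deriv ?_
    simp only [FunLike.coe_smul, Pi.smul_apply, innerSL_apply_apply,
      inner_smul_right, smul_eq_mul]
    ring
  have hY : Continuous fun t : ℝ => a + (t * r) • ψ := by fun_prop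
  have hint : IntervalIntegrable
      (fun t => r * (s ‖a + (t * r) • ψ‖ * ⟪a + (t * r) • ψ, ψ⟫)) volume 0 1 :=
    (continuous_const.mul ((hs.comp_continuous hY.norm fun _ => norm_nonneg _).mul
      (hY.inner continuous_const))).intervalIntegrable 0 1
  rw [segmentFlux, ← intervalIntegral.integral_const_mul,
    intervalIntegral.integral_eq_sub_of_hasDerivAt (fun t _ => hderiv t) hint]
  simp

theorem integral_norm_eq_segmentFlux (hs : ContinuousOn s (Ici 0)) (b : E) :
    ∫ ξ in (0:ℝ)..‖b‖, s ξ * ξ = segmentFlux s 0 b 1 := by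
  simpa using integral_norm_add_smul_sub hs 0 b 1

theorem abs_mul_inner_le (hs : ∀ E > (0:ℝ), 0 ≤ s E ∧ s E * E ≤ C * (1 + E ^ (p - 1)))
    (hp : 1 ≤ p) {Y ψ : E} {B : ℝ} (hY : ‖Y‖ ≤ B) (hψ : ‖ψ‖ ≤ B) :
    |s ‖Y‖ * ⟪Y, ψ⟫| ≤ C * (‖ψ‖ + B ^ p) := by
  have hB : 0 ≤ B := (norm_nonneg ψ).trans hψ
  have hC : 0 ≤ C := by
    obtain ⟨h0, h1⟩ := hs 1 one_pos
    rw [Real.one_rpow] at h1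
    linarith
  rcases (norm_nonneg Y).eq_or_lt with hY0 | hY0
  · rw [norm_eq_zero.1 hY0.symm, inner_zero_left, mul_zero, abs_zero]
    positivity
  obtain ⟨hs0, hsY⟩ := hs _ hY0
  have hB0 : 0 < B := hY0.trans_le hY
  calc |s ‖Y‖ * ⟪Y, ψ⟫| ≤ s ‖Y‖ * ‖Y‖ * ‖ψ‖ := by
        rw [abs_mul, abs_of_nonneg hs0, mul_assoc]
        gcongr
        exact abs_real_inner_le_norm Y ψ
    _ ≤ C * (1 + B ^ (p - 1)) * ‖ψ‖ := by
        refine mul_le_mul_of_nonneg_right (hsY.trans ?_) (norm_nonneg ψ)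
        gcongr
    _ ≤ C * (‖ψ‖ + B ^ (p - 1) * B) := by
        rw [mul_assoc, add_mul, one_mul]
        gcongr
    _ = C * (‖ψ‖ + B ^ p) := by rw [← Real.rpow_add_one hB0.ne', sub_add_cancel]

theorem abs_segmentFlux_le (hs : ∀ E > (0:ℝ), 0 ≤ s E ∧ s E * E ≤ C * (1 + E ^ (p - 1)))
    (hp : 1 ≤ p) {a ψ : E} {r B : ℝ} (hr : |r| ≤ 1) (hB : ‖a‖ + ‖ψ‖ ≤ B) :
    |segmentFlux s a ψ r| ≤ C * (‖ψ‖ + B ^ p) := by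
  have hψ : ‖ψ‖ ≤ B := by linarith [norm_nonneg a]
  have h := intervalIntegral.norm_integral_le_of_norm_le_const (a := 0) (b := 1)
    (f := fun t => s ‖a + (t * r) • ψ‖ * ⟪a + (t * r) • ψ, ψ⟫) (C := C * (‖ψ‖ + B ^ p))
    fun t ht => by
      rw [uIoc_of_le zero_le_one] at ht
      have htr : |t * r| ≤ 1 := by
        rw [abs_mul, abs_of_pos ht.1]
        nlinarith [abs_nonneg r, ht.2]
      refine abs_mul_inner_le hs hp ?_ hψ
      calc ‖a + (t * r) • ψ‖ ≤ ‖a‖ + |t * r| * ‖ψ‖ := by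
            simpa [norm_smul] using norm_add_le a ((t * r) • ψ)
        _ ≤ B := by nlinarith [norm_nonneg ψ]
  simpa [segmentFlux] using h

end SegmentFlux

section Caratheodory

variable {X α : Type*} [MeasurableSpace X] [MeasurableSpace α] {μ : Measure X} {ρ : Measure α}
  {σ : X → ℝ → ℝ} {π : α → X}

theorem aemeasurable_comp_of_measurable_of_continuousOn
    (hσmeas : ∀ E : ℝ, 0 ≤ E → AEMeasurable (fun x => σ x E) μ)
    (hσcont : ∀ᵐ x ∂μ, ContinuousOn (σ x) (Ici 0))
    (hπ : Measure.QuasiMeasurePreserving π ρ μ) {h : α → ℝ} (hh : Measurable h)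
    (hh0 : ∀ z, 0 ≤ h z) :
    AEMeasurable (fun z => σ (π z) (h z)) ρ := by
  -- dyadic approximation of `h` from above by `⌈2ᵐ h⌉ / 2ᵐ`, which takes countably many values
  set D : ℕ → α → ℝ := fun m z => (⌈h z * 2 ^ m⌉₊ : ℝ) / 2 ^ m
  have hD : ∀ m, AEMeasurable (fun z => σ (π z) (D m z)) ρ := by
    intro m
    have hj : ∀ j : ℕ, AEMeasurable (fun z => σ (π z) ((j : ℝ) / 2 ^ m)) ρ :=
      fun j => (hσmeas _ (by positivity)).comp_quasiMeasurePreserving hπ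
    choose F hF hFeq using hj
    have hN : Measurable fun z => ⌈h z * 2 ^ m⌉₊ := (hh.mul_const _).nat_ceil
    refine ⟨fun z => F ⌈h z * 2 ^ m⌉₊ z,
      (measurable_from_prod_countable_left (f := fun q : α × ℕ => F q.2 q.1) hF).comp
        (measurable_id.prodMk hN), ?_⟩
    filter_upwards [ae_all_iff.2 hFeq] with z hz using hz _
  have hlim : ∀ z, 0 ≤ h z → Tendsto (fun m => D m z) atTop (𝓝[Ici 0] (h z)) := by
    intro z hz
    have hle : ∀ m : ℕ, h z ≤ D m z := fun m => by
      rw [le_div_iff₀ (by positivity)]; exact Nat.le_ceil _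
    have hub : ∀ m : ℕ, D m z ≤ h z + 2⁻¹ ^ m := fun m => by
      rw [div_le_iff₀ (by positivity), add_mul, inv_pow, inv_mul_cancel₀ (by positivity)]
      exact (Nat.ceil_lt_add_one (by positivity)).le
    refine tendsto_nhdsWithin_iff.2 ⟨?_, Eventually.of_forall fun m => hz.trans (hle m)⟩
    refine tendsto_of_tendsto_of_tendsto_of_le_of_le tendsto_const_nhds ?_ hle hub
    simpa using tendsto_const_nhds.add
      (tendsto_pow_atTop_nhds_zero_of_lt_one (by norm_num : (0:ℝ) ≤ 2⁻¹) (by norm_num))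
  refine aemeasurable_of_tendsto_metrizable_ae atTop hD ?_
  filter_upwards [hπ.ae hσcont] with z hz
  exact ((hz (h z) (hh0 z)).tendsto).comp (hlim z (hh0 z))

theorem aemeasurable_comp_of_continuousOn
    (hσmeas : ∀ E : ℝ, 0 ≤ E → AEMeasurable (fun x => σ x E) μ)
    (hσcont : ∀ᵐ x ∂μ, ContinuousOn (σ x) (Ici 0))
    (hπ : Measure.QuasiMeasurePreserving π ρ μ) {h : α → ℝ} (hh : AEMeasurable h ρ)
    (hh0 : ∀ z, 0 ≤ h z) :
    AEMeasurable (fun z => σ (π z) (h z)) ρ := by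
  refine (aemeasurable_comp_of_measurable_of_continuousOn hσmeas hσcont hπ
    (hh.measurable_mk.max measurable_const) fun z => le_max_right _ 0).congr ?_
  filter_upwards [hh.ae_eq_mk] with z hz
  rw [← hz, max_eq_left (hh0 z)]

end Caratheodory

section Domination

variable {X E : Type*} [MeasurableSpace X] {μ : Measure X} [NormedAddCommGroup E]
  {p : ℝ≥0∞} {d : ℕ → X → E}

theorem memLp_tsum_norm_of_tsum_eLpNorm_ne_top (hp : 1 ≤ p)
    (hd : ∀ k, AEStronglyMeasurable (d k) μ) (hsum : ∑' k, eLpNorm (d k) p μ ≠ ∞) :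
    MemLp (fun x => ∑' k, ‖d k x‖) p μ := by
  have hlim : ∀ᵐ x ∂μ, Tendsto (fun N => ∑ k ∈ Finset.range N, ‖d k x‖) atTop
      (𝓝 (∑' k, ‖d k x‖)) := by
    filter_upwards [summable_norm_of_tsum_eLpNorm_ne_top hp hd hsum] with x hx
    exact hx.hasSum.tendsto_sum_nat
  have hS : ∀ N, AEStronglyMeasurable (fun x => ∑ k ∈ Finset.range N, ‖d k x‖) μ :=
    fun N => Finset.aestronglyMeasurable_fun_sum _ fun k _ => (hd k).norm
  refine ⟨aestronglyMeasurable_of_tendsto_ae atTop hS hlim,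
    lt_of_le_of_lt (Lp.eLpNorm_le_of_ae_tendsto (Eventually.of_forall fun N => ?_) hS hlim)
      hsum.lt_top⟩
  calc eLpNorm (fun x => ∑ k ∈ Finset.range N, ‖d k x‖) p μ
      ≤ ∑ k ∈ Finset.range N, eLpNorm (fun x => ‖d k x‖) p μ := by
        simpa only [Finset.sum_fn] using
          eLpNorm_sum_le (fun k _ => (hd k).norm) hp
    _ ≤ ∑' k, eLpNorm (d k) p μ := by
        simpa only [eLpNorm_norm] using ENNReal.sum_le_tsum _

theorem exists_subseq_ae_tendsto_of_memLp_dominating (hp : 1 ≤ p)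
    (hd : ∀ k, AEStronglyMeasurable (d k) μ)
    (hlim : Tendsto (fun k => eLpNorm (d k) p μ) atTop (𝓝 0)) :
    ∃ ms : ℕ → ℕ, StrictMono ms ∧ ∃ W : X → ℝ, MemLp W p μ ∧
      ∀ᵐ x ∂μ, Tendsto (fun k => d (ms k) x) atTop (𝓝 0) ∧ ∀ k, ‖d (ms k) x‖ ≤ W x := by
  obtain ⟨ms, hms, hsmall⟩ : ∃ ms : ℕ → ℕ, StrictMono ms ∧
      ∀ k, eLpNorm (d (ms k)) p μ ≤ 2⁻¹ ^ k :=
    extraction_forall_of_eventually fun k =>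
      hlim.eventually (ge_mem_nhds (ENNReal.pow_pos (by norm_num) k))
  have hsum : ∑' k, eLpNorm (d (ms k)) p μ ≠ ∞ :=
    ne_top_of_le_ne_top (by simp [ENNReal.tsum_geometric]) (ENNReal.tsum_le_tsum hsmall)
  refine ⟨ms, hms, _, memLp_tsum_norm_of_tsum_eLpNorm_ne_top hp (fun k => hd _) hsum, ?_⟩
  filter_upwards [summable_norm_of_tsum_eLpNorm_ne_top hp (fun k => hd _) hsum] with x hx
  exact ⟨tendsto_zero_iff_norm_tendsto_zero.2 hx.tendsto_atTop_zero,
    fun k => hx.le_tsum k fun j _ => norm_nonneg _⟩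

end Domination

section Integrals

variable {X E : Type*} [MeasurableSpace X] {μ : Measure X} [NormedAddCommGroup E]
  [InnerProductSpace ℝ E] {σ : X → ℝ → ℝ} {C p : ℝ}

theorem aestronglyMeasurable_segmentFlux [SFinite μ]
    (hσmeas : ∀ E : ℝ, 0 ≤ E → AEMeasurable (fun x => σ x E) μ)
    (hσcont : ∀ᵐ x ∂μ, ContinuousOn (σ x) (Ici 0)) {a ψ : X → E}
    (ha : AEStronglyMeasurable a μ) (hψ : AEStronglyMeasurable ψ μ) (r : ℝ) :
    AEStronglyMeasurable (fun x => segmentFlux (σ x) (a x) (ψ x) r) μ := by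
  set ν : Measure ℝ := volume.restrict (Ioc 0 1)
  have hπ : Measure.QuasiMeasurePreserving (Prod.fst : X × ℝ → X) (μ.prod ν) μ :=
    Measure.quasiMeasurePreserving_fst
  have hψ' := hψ.comp_quasiMeasurePreserving hπ
  have hY : AEStronglyMeasurable (fun q : X × ℝ => a q.1 + (q.2 * r) • ψ q.1) (μ.prod ν) :=
    (ha.comp_quasiMeasurePreserving hπ).add
      ((measurable_snd.mul_const r).aestronglyMeasurable.smul hψ')
  have hσY := aemeasurable_comp_of_continuousOn hσmeas hσcont hπ hY.norm.aemeasurable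
    fun _ => norm_nonneg _
  refine ((hσY.aestronglyMeasurable.mul (hY.inner hψ')).integral_prod_right').congr ?_
  filter_upwards with x
  exact (intervalIntegral.integral_of_le zero_le_one).symm

theorem tendsto_integral_segmentFlux {ι : Type*} [IsFiniteMeasure μ] (hp : 1 ≤ p)
    (hσmeas : ∀ E : ℝ, 0 ≤ E → AEMeasurable (fun x => σ x E) μ)
    (hσcont : ∀ᵐ x ∂μ, ContinuousOn (σ x) (Ici 0))
    (hσ : ∀ᵐ x ∂μ, ∀ E > (0:ℝ), 0 ≤ σ x E ∧ σ x E * E ≤ C * (1 + E ^ (p - 1)))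
    {ψ : X → E} (hψ : MemLp ψ (ENNReal.ofReal p) μ) {a : ι → X → E} {a₀ : X → E}
    (ha : ∀ i, AEStronglyMeasurable (a i) μ) (ha₀ : MemLp a₀ (ENNReal.ofReal p) μ)
    {l : Filter ι} [l.IsCountablyGenerated]
    (hconv : Tendsto (fun i => eLpNorm (fun x => a i x - a₀ x) (ENNReal.ofReal p) μ) l (𝓝 0))
    {r : ι → ℝ} (hr : Tendsto r l (𝓝 0)) :
    Tendsto (fun i => ∫ x, segmentFlux (σ x) (a i x) (ψ x) (r i) ∂μ) l
      (𝓝 (∫ x, σ x ‖a₀ x‖ * ⟪a₀ x, ψ x⟫ ∂μ)) := by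
  have hp' : 1 ≤ ENNReal.ofReal p := by simpa using ENNReal.ofReal_le_ofReal hp
  refine tendsto_of_subseq_tendsto fun ns hns => ?_
  obtain ⟨ms, hms, W, hW, hWae⟩ := exists_subseq_ae_tendsto_of_memLp_dominating hp'
    (fun k => (ha (ns k)).sub ha₀.1) (hconv.comp hns)
  have hr' : Tendsto (fun k => r (ns (ms k))) atTop (𝓝 0) :=
    hr.comp (hns.comp hms.tendsto_atTop)
  have hr1 : ∀ᶠ k in atTop, |r (ns (ms k))| ≤ 1 := by
    simpa using hr'.abs.eventually (ge_mem_nhds (by simp : |(0:ℝ)| < 1))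
  set B : X → ℝ := fun x => ‖a₀ x‖ + W x + ‖ψ x‖
  have hB : MemLp B (ENNReal.ofReal p) μ := (ha₀.norm.add hW).add hψ.norm
  refine ⟨ms, tendsto_integral_filter_of_dominated_convergence
    (fun x => C * (‖ψ x‖ + ‖B x‖ ^ p)) ?_ ?_ ?_ ?_⟩
  · exact Eventually.of_forall fun k =>
      aestronglyMeasurable_segmentFlux hσmeas hσcont (ha _) hψ.1 _
  · filter_upwards [hr1] with k hk
    filter_upwards [hσ, hWae] with x hx hWx
    refine abs_segmentFlux_le hx hp hk (le_trans ?_ (le_abs_self (B x)))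
    have hWk : ‖a (ns (ms k)) x - a₀ x‖ ≤ W x := hWx.2 k
    simp only [B]
    linarith [norm_le_norm_add_norm_sub' (a (ns (ms k)) x) (a₀ x)]
  · have hBp := hB.integrable_norm_rpow'
    rw [ENNReal.toReal_ofReal (by linarith)] at hBp
    exact ((hψ.integrable hp').norm.add hBp).const_mul C
  · filter_upwards [hσcont, hWae] with x hx hWx
    have ha' : Tendsto (fun k => a (ns (ms k)) x) atTop (𝓝 (a₀ x)) := by
      simpa using hWx.1.add_const (a₀ x)
    simpa [segmentFlux_zero, Function.comp_def] using
      ((continuous_segmentFlux hx (ψ x)).tendsto (a₀ x, 0)).comp (ha'.prodMk_nhds hr')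

theorem integrable_integral_norm [IsFiniteMeasure μ] (hp : 1 ≤ p)
    (hσmeas : ∀ E : ℝ, 0 ≤ E → AEMeasurable (fun x => σ x E) μ)
    (hσcont : ∀ᵐ x ∂μ, ContinuousOn (σ x) (Ici 0))
    (hσ : ∀ᵐ x ∂μ, ∀ E > (0:ℝ), 0 ≤ σ x E ∧ σ x E * E ≤ C * (1 + E ^ (p - 1)))
    {b : X → E} (hb : MemLp b (ENNReal.ofReal p) μ) :
    Integrable (fun x => ∫ ξ in (0:ℝ)..‖b x‖, σ x ξ * ξ) μ := by
  have hp' : 1 ≤ ENNReal.ofReal p := by simpa using ENNReal.ofReal_le_ofReal hp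
  have hbp := hb.integrable_norm_rpow'
  rw [ENNReal.toReal_ofReal (by linarith)] at hbp
  refine Integrable.congr (f := fun x => segmentFlux (σ x) 0 (b x) 1) ?_ ?_
  · refine Integrable.mono' (((hb.integrable hp').norm.add hbp).const_mul C)
      (aestronglyMeasurable_segmentFlux hσmeas hσcont aestronglyMeasurable_const hb.1 1) ?_
    filter_upwards [hσ] with x hx
    exact abs_segmentFlux_le hx hp (by simp) (by simp)
  · filter_upwards [hσcont] with x hx
    exact (integral_norm_eq_segmentFlux hx (b x)).symm

end Integrals

section Gradient

variable {F : Type*} [NormedAddCommGroup F] [InnerProductSpace ℝ F] [CompleteSpace F]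
  {w φ : F → ℝ}

theorem gradient_add_const_mul_s2 (hw : Differentiable ℝ w) (hφ : Differentiable ℝ φ) (r : ℝ) :
    gradient (fun y => w y + r * φ y) = fun x => gradient w x + r • gradient φ x := by
  ext1 x
  simp only [gradient, fderiv_fun_add (hw x) ((hφ x).const_mul r), fderiv_const_mul (hφ x) r,
    map_add, map_smul]

theorem measurable_gradient [MeasurableSpace F] [BorelSpace F] (w : F → ℝ) :
    Measurable (gradient w) :=
  (InnerProductSpace.toDual ℝ F).symm.continuous.measurable.comp (measurable_fderiv ℝ w)

theorem memLp_gradient_add_const_mul [MeasurableSpace F] {μ : Measure F} {q : ℝ≥0∞}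
    (hw : Differentiable ℝ w) (hφ : Differentiable ℝ φ) (hwq : MemLp (gradient w) q μ)
    (hφq : MemLp (gradient φ) q μ) (r : ℝ) :
    MemLp (gradient fun y => w y + r * φ y) q μ := by
  rw [gradient_add_const_mul_s2 hw hφ r]
  exact hwq.add (hφq.const_smul r)

end Gradient

theorem dirichletEnergy_add_const_mul_sub {n : ℕ} {Ω : Set (EuclideanSpace ℝ (Fin n))}
    [IsFiniteMeasure (volume.restrict Ω)] {σ : EuclideanSpace ℝ (Fin n) → ℝ → ℝ} {C p : ℝ}
    (hp : 1 ≤ p)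
    (hσmeas : ∀ E : ℝ, 0 ≤ E → AEMeasurable (fun x => σ x E) (volume.restrict Ω))
    (hσcont : ∀ᵐ x ∂(volume.restrict Ω), ContinuousOn (σ x) (Ici 0))
    (hσ : ∀ᵐ x ∂(volume.restrict Ω), ∀ E > (0:ℝ),
      0 ≤ σ x E ∧ σ x E * E ≤ C * (1 + E ^ (p - 1)))
    {w φ : EuclideanSpace ℝ (Fin n) → ℝ} (hw : Differentiable ℝ w) (hφ : Differentiable ℝ φ)
    (hwp : MemLp (gradient w) (ENNReal.ofReal p) (volume.restrict Ω))
    (hφp : MemLp (gradient φ) (ENNReal.ofReal p) (volume.restrict Ω)) (ε : ℝ) :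
    dirichletEnergy Ω σ (fun y => w y + ε * φ y) - dirichletEnergy Ω σ w =
      ε * ∫ x in Ω, segmentFlux (σ x) (gradient w x) (gradient φ x) ε := by
  simp only [dirichletEnergy, dirichletDensity, gradient_add_const_mul_s2 hw hφ ε]
  rw [← integral_sub (integrable_integral_norm hp hσmeas hσcont hσ
      (b := fun x => gradient w x + ε • gradient φ x) (hwp.add (hφp.const_smul ε)))
    (integrable_integral_norm hp hσmeas hσcont hσ hwp), ← integral_const_mul]
  refine integral_congr_ae ?_
  filter_upwards [hσcont] with x hx
  exact integral_norm_add_smul_sub hx _ _ ε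

theorem sub_bounds_of_minimizes_translates {α : Type*} {F : (α → ℝ) → ℝ} {A : Set (α → ℝ)}
    {φ : α → ℝ} {u : ℝ → α → ℝ} {S : Set ℝ}
    (hmin : ∀ ε ∈ S, (∃ v ∈ A, u ε = fun x => v x + ε * φ x) ∧
      ∀ w, (∃ v ∈ A, w = fun x => v x + ε * φ x) → F (u ε) ≤ F w)
    (h0 : 0 ∈ S) {ε : ℝ} (hε : ε ∈ S) :
    F (u ε) - F (fun x => u ε x + -ε * φ x) ≤ F (u ε) - F (u 0) ∧
      F (u ε) - F (u 0) ≤ F (fun x => u 0 x + ε * φ x) - F (u 0) := by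
  obtain ⟨⟨v₀, hv₀, hu₀⟩, hmin₀⟩ := hmin 0 h0
  obtain ⟨⟨v, hv, huε⟩, hminε⟩ := hmin ε hε
  have hback : (fun x => u ε x + -ε * φ x) = v := by
    funext x
    simp [huε]
  have hu₀A : u 0 ∈ A := by simpa [hu₀] using hv₀
  rw [hback]
  exact ⟨by linarith [hmin₀ v ⟨v, hv, by simp⟩], by linarith [hminε _ ⟨u 0, hu₀A, rfl⟩]⟩

theorem tendsto_div_of_mul_le_of_le_mul {l : Filter ℝ} {f g h : ℝ → ℝ} {L : ℝ}
    (hf : Tendsto f l (𝓝 L)) (hh : Tendsto h l (𝓝 L))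
    (hfgh : ∀ᶠ ε in l, ε ≠ 0 ∧ ε * f ε ≤ g ε ∧ g ε ≤ ε * h ε) :
    Tendsto (fun ε => g ε / ε) l (𝓝 L) := by
  refine tendsto_of_tendsto_of_tendsto_of_le_of_le' (by simpa using hf.min hh)
    (by simpa using hf.max hh) ?_ ?_
  all_goals
    filter_upwards [hfgh] with ε ⟨hε, hfg, hgh⟩
    rcases hε.lt_or_gt with hε | hε
  · rw [le_div_iff_of_neg hε]; nlinarith [min_le_right (f ε) (h ε)]
  · rw [le_div_iff₀ hε]; nlinarith [min_le_left (f ε) (h ε)]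
  · rw [div_le_iff_of_neg hε]; nlinarith [le_max_left (f ε) (h ε)]
  · rw [div_le_iff₀ hε]; nlinarith [le_max_right (f ε) (h ε)]

theorem gateaux_derivative_composed_energy_general
    {n : ℕ} (Ω : Set (EuclideanSpace ℝ (Fin n)))
    (hΩb : Bornology.IsBounded Ω)
    (p : ℝ) (hp : 2 ≤ p)
    (σ : EuclideanSpace ℝ (Fin n) → ℝ → ℝ)
    -- (H1) measurability in x
    (hσmeas : ∀ E : ℝ, 0 ≤ E → AEMeasurable (fun x => σ x E) (volume.restrict Ω))
    -- (H3) continuity of E ↦ σ(x,E) on [0,∞)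
    (hσcont : ∀ᵐ x ∂(volume.restrict Ω), ContinuousOn (fun E => σ x E) (Set.Ici 0))
    -- (H4) two-sided growth bound with exponent p
    (hσgrowth : ∃ σl σu E₀ : ℝ, 0 < σl ∧ σl ≤ σu ∧ 0 < E₀ ∧
      ∀ᵐ x ∂(volume.restrict Ω), ∀ E > (0:ℝ),
        σl * (E / E₀) ^ (p - 2) ≤ σ x E ∧ σ x E ≤ σu * max 1 ((E / E₀) ^ (p - 2)))
    -- the admissible class: weakly differentiable functions with gradients in L²(Ω) ∩ L^p(Ω)
    (A : Set (EuclideanSpace ℝ (Fin n) → ℝ))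
    (hA : ∀ v ∈ A, Differentiable ℝ v ∧
      MemLp (fun x => gradient v x) 2 (volume.restrict Ω) ∧
      MemLp (fun x => gradient v x) (ENNReal.ofReal p) (volume.restrict Ω))
    -- the direction φ, weakly differentiable with gradient in L²(Ω) ∩ L^p(Ω)
    (φ : EuclideanSpace ℝ (Fin n) → ℝ) (hφ : Differentiable ℝ φ)
    (hφLp : MemLp (fun x => gradient φ x) (ENNReal.ofReal p) (volume.restrict Ω))
    -- for each ε ∈ (−1,1), u ε minimizes F_σ over A_ε = {v + εφ : v ∈ A}
    (u : ℝ → EuclideanSpace ℝ (Fin n) → ℝ)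
    (hmin : ∀ ε ∈ Set.Ioo (-1:ℝ) 1,
      (∃ v ∈ A, u ε = fun x => v x + ε * φ x) ∧
      ∀ w, (∃ v ∈ A, w = fun x => v x + ε * φ x) →
        dirichletEnergy Ω σ (u ε) ≤ dirichletEnergy Ω σ w)
    -- ∇u_ε → ∇u₀ in L^p(Ω) as ε → 0
    (hconv : Tendsto (fun ε : ℝ =>
        eLpNorm (fun x => gradient (u ε) x - gradient (u 0) x)
          (ENNReal.ofReal p) (volume.restrict Ω))
      (𝓝[Set.Ioo (-1:ℝ) 1 \ {0}] 0) (𝓝 0)) :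
    Tendsto (fun ε : ℝ =>
        (dirichletEnergy Ω σ (u ε) - dirichletEnergy Ω σ (u 0)) / ε)
      (𝓝[Set.Ioo (-1:ℝ) 1 \ {0}] 0)
      (𝓝 (∫ x in Ω, σ x ‖gradient (u 0) x‖ * ⟪gradient (u 0) x, gradient φ x⟫)) := by
  obtain ⟨σl, σu, E₀, hσl, hσlu, hE₀, hσg⟩ := hσgrowth
  have hσ := ae_growth_of_two_sided_bound hp hσl.le (hσl.le.trans hσlu) hE₀ hσg
  have hp1 : 1 ≤ p := by linarith
  have : IsFiniteMeasure (volume.restrict Ω) := isFiniteMeasure_restrict.2 hΩb.measure_lt_top.ne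
  have hadm : ∀ ε ∈ Ioo (-1:ℝ) 1, Differentiable ℝ (u ε) ∧
      MemLp (gradient (u ε)) (ENNReal.ofReal p) (volume.restrict Ω) := fun ε hε => by
    obtain ⟨v, hv, huε⟩ := (hmin ε hε).1
    obtain ⟨hvd, -, hvp⟩ := hA v hv
    exact huε ▸ ⟨hvd.add (hφ.const_mul ε), memLp_gradient_add_const_mul hvd hφ hvp hφLp ε⟩
  have h0 : (0:ℝ) ∈ Ioo (-1:ℝ) 1 := ⟨by norm_num, by norm_num⟩
  have hid : Tendsto (fun ε : ℝ => ε) (𝓝[Ioo (-1:ℝ) 1 \ {0}] 0) (𝓝 0) :=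
    tendsto_id.mono_left nhdsWithin_le_nhds
  have hgrad := fun w => (measurable_gradient w).aestronglyMeasurable (μ := volume.restrict Ω)
  have hP₁ := tendsto_integral_segmentFlux hp1 hσmeas hσcont hσ hφLp (a := fun _ => gradient (u 0))
    (fun _ => hgrad _) (hadm 0 h0).2 (by simpa using tendsto_const_nhds) hid
  have hP₂ := tendsto_integral_segmentFlux hp1 hσmeas hσcont hσ hφLp (fun ε => hgrad (u ε))
    (hadm 0 h0).2 hconv (by simpa using hid.neg)
  refine tendsto_div_of_mul_le_of_le_mul hP₂ hP₁ ?_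
  filter_upwards [self_mem_nhdsWithin] with ε ⟨hε, hε0⟩
  obtain ⟨hlow, hupp⟩ := sub_bounds_of_minimizes_translates hmin h0 hε
  have h₁ := dirichletEnergy_add_const_mul_sub hp1 hσmeas hσcont hσ (hadm 0 h0).1 hφ
    (hadm 0 h0).2 hφLp ε
  have h₂ := dirichletEnergy_add_const_mul_sub hp1 hσmeas hσcont hσ (hadm ε hε).1 hφ
    (hadm ε hε).2 hφLp (-ε)
  rw [neg_mul] at h₂
  exact ⟨hε0, by linarith, by linarith⟩

/-- **Gâteaux derivative with respect to the boundary datum** (Proposition 3.4):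
if `u_ε` minimizes `F_σ` over the translated admissible class `A_ε = {v + εφ : v ∈ A}`
and `∇u_ε → ∇u₀` in `L^p(Ω)` as `ε → 0`, then
`lim_{ε→0} (F_σ(u_ε) − F_σ(u₀))/ε = ∫_Ω σ(x,|∇u₀|) ∇u₀·∇φ dx`. -/
theorem gateaux_derivative_composed_energy
    {n : ℕ} (Ω : Set (EuclideanSpace ℝ (Fin n)))
    (hΩo : IsOpen Ω) (hΩb : Bornology.IsBounded Ω)
    (p : ℝ) (hp : 2 ≤ p)
    (σ : EuclideanSpace ℝ (Fin n) → ℝ → ℝ)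
    -- (H1) measurability in x
    (hσmeas : ∀ E : ℝ, 0 ≤ E → AEMeasurable (fun x => σ x E) (volume.restrict Ω))
    -- (H2) strict monotonicity of E ↦ σ(x,E)·E on (0,∞)
    (hσmono : ∀ᵐ x ∂(volume.restrict Ω), StrictMonoOn (fun E => σ x E * E) (Set.Ioi 0))
    -- (H3) continuity of E ↦ σ(x,E) on [0,∞)
    (hσcont : ∀ᵐ x ∂(volume.restrict Ω), ContinuousOn (fun E => σ x E) (Set.Ici 0))
    -- (H4) two-sided growth bound with exponent p
    (hσgrowth : ∃ σl σu E₀ : ℝ, 0 < σl ∧ σl ≤ σu ∧ 0 < E₀ ∧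
      ∀ᵐ x ∂(volume.restrict Ω), ∀ E > (0:ℝ),
        σl * (E / E₀) ^ (p - 2) ≤ σ x E ∧ σ x E ≤ σu * max 1 ((E / E₀) ^ (p - 2)))
    -- the admissible class: weakly differentiable functions with gradients in L²(Ω) ∩ L^p(Ω)
    (A : Set (EuclideanSpace ℝ (Fin n) → ℝ))
    (hA : ∀ v ∈ A, Differentiable ℝ v ∧
      MemLp (fun x => gradient v x) 2 (volume.restrict Ω) ∧
      MemLp (fun x => gradient v x) (ENNReal.ofReal p) (volume.restrict Ω))
    -- the direction φ, weakly differentiable with gradient in L²(Ω) ∩ L^p(Ω)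
    (φ : EuclideanSpace ℝ (Fin n) → ℝ) (hφ : Differentiable ℝ φ)
    (hφL2 : MemLp (fun x => gradient φ x) 2 (volume.restrict Ω))
    (hφLp : MemLp (fun x => gradient φ x) (ENNReal.ofReal p) (volume.restrict Ω))
    -- for each ε ∈ (−1,1), u ε minimizes F_σ over A_ε = {v + εφ : v ∈ A}
    (u : ℝ → EuclideanSpace ℝ (Fin n) → ℝ)
    (hmin : ∀ ε ∈ Set.Ioo (-1:ℝ) 1,
      (∃ v ∈ A, u ε = fun x => v x + ε * φ x) ∧
      ∀ w, (∃ v ∈ A, w = fun x => v x + ε * φ x) →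
        dirichletEnergy Ω σ (u ε) ≤ dirichletEnergy Ω σ w)
    -- ∇u_ε → ∇u₀ in L^p(Ω) as ε → 0
    (hconv : Tendsto (fun ε : ℝ =>
        eLpNorm (fun x => gradient (u ε) x - gradient (u 0) x)
          (ENNReal.ofReal p) (volume.restrict Ω))
      (𝓝[Set.Ioo (-1:ℝ) 1 \ {0}] 0) (𝓝 0)) :
    Tendsto (fun ε : ℝ =>
        (dirichletEnergy Ω σ (u ε) - dirichletEnergy Ω σ (u 0)) / ε)
      (𝓝[Set.Ioo (-1:ℝ) 1 \ {0}] 0)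
      (𝓝 (∫ x in Ω, σ x ‖gradient (u 0) x‖ * ⟪gradient (u 0) x, gradient φ x⟫)) :=
  gateaux_derivative_composed_energy_general Ω hΩb p hp σ hσmeas hσcont hσgrowth A hA φ hφ hφLp u
    hmin hconv
end

section
/- Let Ω ⊆ ℝⁿ be an open bounded set, let p ≥ 2, and let σ : Ω × [0,∞) → ℝ be measurable and satisfy the upper bound in (H4) with constants σ̄, E₀ and the coercivity (H5) with constant c > 0. Let u₀, u₁, φ : ℝⁿ → ℝ be weakly differentiable with gradients (restricted to Ω) in L²(Ω) ∩ L^p(Ω), and let ε ∈ ℝ. Assume the two weak-formulation identities ∫_Ω σ(x,|∇u₁|) ∇u₁·(∇u₁ − ∇u₀ − ε∇φ) dx = 0 and ∫_Ω σ(x,|∇u₀|) ∇u₀·(∇u₁ − ∇u₀ − ε∇φ) dx = 0. Then c·‖∇u₁ − ∇u₀‖_{L^p(Ω)}^p ≤ |ε|·σ̄·[ ‖∇φ‖_{L²(Ω)}·(‖∇u₁‖_{L²(Ω)} + ‖∇u₀‖_{L²(Ω)}) + E₀^{2−p}·‖∇φ‖_{L^p(Ω)}·(‖∇u₁‖_{L^p(Ω)}^{p−1}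 + ‖∇u₀‖_{L^p(Ω)}^{p−1}) ]. (The key quantitative estimate in the proof of Lemma 3.1.) -/
/-!
Subtracting the two weak identities gives
`∫ ⟪σ(|∇u₁|)∇u₁ − σ(|∇u₀|)∇u₀, ∇u₁ − ∇u₀⟫ = ε ∫ ⟪σ(|∇u₁|)∇u₁ − σ(|∇u₀|)∇u₀, ∇φ⟫`,
and coercivity bounds the left side below by `c‖∇u₁ − ∇u₀‖ₚᵖ`. Coercivity against `a = 0` also
forces `σ ≥ 0`, so the upper bound in (H4) gives `|σ(x,|ξ|)ξ| ≤ σ̄ (|ξ| + E₀^{2−p} |ξ|^{p−1})`;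
Hölder's inequality with exponents `(2, 2)` and `(p/(p−1), p)` then bounds the right side.
-/

open MeasureTheory
open scoped ENNReal RealInnerProductSpace

theorem mul_max_one_div_rpow_le {r E₀ p : ℝ} (hr : 0 ≤ r) (hE₀ : 0 < E₀) :
    r * max 1 ((r / E₀) ^ (p - 2)) ≤ r + E₀ ^ (2 - p) * r ^ (p - 1) := by
  rcases hr.eq_or_lt with rfl | hr
  · simp only [zero_mul, zero_add]
    positivity
  have hsplit : r * (r / E₀) ^ (p - 2) = E₀ ^ (2 - p) * r ^ (p - 1) := by
    rw [Real.div_rpow hr.le hE₀.le, div_eq_mul_inv, ← Real.rpow_neg hE₀.le, neg_sub,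
      show p - 1 = (p - 2) + 1 by ring, Real.rpow_add_one hr.ne']
    ring
  calc r * max 1 ((r / E₀) ^ (p - 2)) ≤ r * (1 + (r / E₀) ^ (p - 2)) := by
        gcongr
        exact max_le (by linarith [show 0 ≤ (r / E₀) ^ (p - 2) by positivity]) (by linarith)
    _ = r + E₀ ^ (2 - p) * r ^ (p - 1) := by rw [mul_add, mul_one, hsplit]

theorem pos_of_coercive {E : Type*} [NormedAddCommGroup E] [InnerProductSpace ℝ E]
    {s : ℝ → ℝ} {c p : ℝ} (hc : 0 < c)
    (hcoer : ∀ a b : E, c * ‖b - a‖ ^ p ≤ ⟪s ‖b‖ • b - s ‖a‖ • a, b - a⟫) {b : E} (hb : b ≠ 0) :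
    0 < s ‖b‖ := by
  have h := hcoer 0 b
  simp only [sub_zero, norm_zero, smul_zero, real_inner_smul_left,
    real_inner_self_eq_norm_sq] at h
  have hpos : 0 < c * ‖b‖ ^ p := by positivity
  exact pos_of_mul_pos_left (hpos.trans_le h) (by positivity)

namespace MeasureTheory

variable {α : Type*} [MeasurableSpace α] {μ : Measure α}

section Holder

variable {F G : Type*} [NormedAddCommGroup F] [NormedAddCommGroup G] {f : α → F} {g : α → G}

theorem MemLp.integrable_norm_mul_norm {p q : ℝ≥0∞} [ENNReal.HolderTriple p q 1]
    (hf : MemLp f p μ) (hg : MemLp g q μ) : Integrable (fun x => ‖f x‖ * ‖g x‖) μ :=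
  hf.norm.integrable_mul hg.norm

theorem integral_norm_mul_norm_le {p q : ℝ≥0∞} [ENNReal.HolderTriple p q 1]
    (hf : MemLp f p μ) (hg : MemLp g q μ) :
    ∫ x, ‖f x‖ * ‖g x‖ ∂μ ≤ (eLpNorm f p μ).toReal * (eLpNorm g q μ).toReal := by
  have hHolder : eLpNorm (fun x => ‖f x‖ * ‖g x‖) 1 μ ≤ eLpNorm f p μ * eLpNorm g q μ := by
    simpa using eLpNorm_le_eLpNorm_mul_eLpNorm'_of_norm hf.1 hg.1 (fun a b => ‖a‖ * ‖b‖) 1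
      (.of_forall fun x => by simp)
  have hint := hf.integrable_norm_mul_norm hg
  calc ∫ x, ‖f x‖ * ‖g x‖ ∂μ = (eLpNorm (fun x => ‖f x‖ * ‖g x‖) 1 μ).toReal := by
        rw [toReal_eLpNorm hint.1, lpNorm_one_eq_integral_norm hint.1]
        simp only [norm_mul, norm_norm]
    _ ≤ (eLpNorm f p μ * eLpNorm g q μ).toReal :=
        ENNReal.toReal_mono (ENNReal.mul_ne_top hf.eLpNorm_ne_top hg.eLpNorm_ne_top) hHolder
    _ = _ := ENNReal.toReal_mul

variable {p : ℝ}

theorem toReal_eLpNorm_ofReal_rpow (hp : 0 < p) (hf : AEStronglyMeasurable f μ) :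
    (eLpNorm f (.ofReal p) μ).toReal ^ p = ∫ x, ‖f x‖ ^ p ∂μ := by
  rw [toReal_eLpNorm hf, lpNorm_eq_integral_norm_rpow_toReal (by simpa using hp) (by simp) hf,
    ENNReal.toReal_ofReal hp.le, ← Real.rpow_mul (by positivity), inv_mul_cancel₀ hp.ne',
    Real.rpow_one]

theorem MemLp.norm_rpow_sub_one (hp : 1 < p) (hf : MemLp f (.ofReal p) μ) :
    MemLp (fun x => ‖f x‖ ^ (p - 1)) (.ofReal (p / (p - 1))) μ := by
  have := hf.norm_rpow_div (.ofReal (p - 1))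
  rwa [ENNReal.toReal_ofReal (by linarith), ← ENNReal.ofReal_div_of_pos (by linarith)] at this

theorem eLpNorm_norm_rpow_sub_one (hp : 1 < p) (f : α → F) :
    eLpNorm (fun x => ‖f x‖ ^ (p - 1)) (.ofReal (p / (p - 1))) μ
      = eLpNorm f (.ofReal p) μ ^ (p - 1) := by
  rw [eLpNorm_norm_rpow f (by linarith), ← ENNReal.ofReal_mul (by positivity),
    div_mul_cancel₀ _ (by linarith)]

theorem MemLp.integrable_norm_rpow_sub_one_mul_norm (hp : 1 < p) (hf : MemLp f (.ofReal p) μ)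
    (hg : MemLp g (.ofReal p) μ) : Integrable (fun x => ‖f x‖ ^ (p - 1) * ‖g x‖) μ := by
  have : ENNReal.HolderTriple (.ofReal (p / (p - 1))) (.ofReal p) 1 :=
    (Real.HolderConjugate.conjExponent hp).symm.ennrealOfReal
  simpa only [Real.norm_eq_abs, abs_of_nonneg (Real.rpow_nonneg (norm_nonneg _) _)] using
    (hf.norm_rpow_sub_one hp).integrable_norm_mul_norm hg

theorem integral_norm_rpow_sub_one_mul_norm_le (hp : 1 < p) (hf : MemLp f (.ofReal p) μ)
    (hg : MemLp g (.ofReal p) μ) :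
    ∫ x, ‖f x‖ ^ (p - 1) * ‖g x‖ ∂μ
      ≤ (eLpNorm f (.ofReal p) μ).toReal ^ (p - 1) * (eLpNorm g (.ofReal p) μ).toReal := by
  have : ENNReal.HolderTriple (.ofReal (p / (p - 1))) (.ofReal p) 1 :=
    (Real.HolderConjugate.conjExponent hp).symm.ennrealOfReal
  simpa only [Real.norm_eq_abs, abs_of_nonneg (Real.rpow_nonneg (norm_nonneg _) _),
    eLpNorm_norm_rpow_sub_one hp, ENNReal.toReal_rpow] using
    integral_norm_mul_norm_le (hf.norm_rpow_sub_one hp) hg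

end Holder

variable {E : Type*} [NormedAddCommGroup E] [InnerProductSpace ℝ E]
  {σ : α → ℝ → ℝ} {p σu E₀ c : ℝ} {f v : α → E}

theorem integral_mul_inner_eq_of_integral_mul_inner_sub_smul_eq_zero {s : α → ℝ} {d w : α → E}
    (ε : ℝ) (hd : Integrable (fun x => s x * ⟪f x, d x - ε • w x⟫) μ)
    (hw : Integrable (fun x => s x * ⟪f x, w x⟫) μ)
    (h : ∫ x, s x * ⟪f x, d x - ε • w x⟫ ∂μ = 0) :
    ∫ x, s x * ⟪f x, d x⟫ ∂μ = ε * ∫ x, s x * ⟪f x, w x⟫ ∂μ := by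
  have hsplit : (fun x => s x * ⟪f x, d x⟫)
      = fun x => s x * ⟪f x, d x - ε • w x⟫ + ε * (s x * ⟪f x, w x⟫) := by
    funext x
    rw [inner_sub_right, real_inner_smul_right]
    ring
  rw [hsplit, integral_add hd (hw.const_mul ε), h, integral_const_mul, zero_add]

theorem mul_integral_norm_sub_rpow_le {f₀ f₁ : α → E}
    (hcoer : ∀ᵐ x ∂μ, ∀ a b : E, c * ‖b - a‖ ^ p ≤ ⟪σ x ‖b‖ • b - σ x ‖a‖ • a, b - a⟫)
    (hd : Integrable (fun x => ‖f₁ x - f₀ x‖ ^ p) μ)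
    (h₁ : Integrable (fun x => σ x ‖f₁ x‖ * ⟪f₁ x, f₁ x - f₀ x⟫) μ)
    (h₀ : Integrable (fun x => σ x ‖f₀ x‖ * ⟪f₀ x, f₁ x - f₀ x⟫) μ) :
    c * ∫ x, ‖f₁ x - f₀ x‖ ^ p ∂μ
      ≤ ∫ x, σ x ‖f₁ x‖ * ⟪f₁ x, f₁ x - f₀ x⟫ ∂μ - ∫ x, σ x ‖f₀ x‖ * ⟪f₀ x, f₁ x - f₀ x⟫ ∂μ := by
  rw [← integral_const_mul, ← integral_sub h₁ h₀]
  refine integral_mono_ae (hd.const_mul c) (h₁.sub h₀) ?_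
  filter_upwards [hcoer] with x hx
  simpa only [inner_sub_left, real_inner_smul_left] using hx (f₀ x) (f₁ x)

section Flux

variable (hσu : 0 ≤ σu) (hE₀ : 0 < E₀)
  (hupper : ∀ᵐ x ∂μ, ∀ E > (0:ℝ), σ x E ≤ σu * max 1 ((E / E₀) ^ (p - 2)))
  (hc : 0 < c)
  (hcoer : ∀ᵐ x ∂μ, ∀ a b : E, c * ‖b - a‖ ^ p ≤ ⟪σ x ‖b‖ • b - σ x ‖a‖ • a, b - a⟫)
include hσu hE₀ hupper hc hcoer

theorem ae_abs_mul_inner_le (f v : α → E) :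
    ∀ᵐ x ∂μ, |σ x ‖f x‖ * ⟪f x, v x⟫|
      ≤ σu * (‖f x‖ * ‖v x‖ + E₀ ^ (2 - p) * (‖f x‖ ^ (p - 1) * ‖v x‖)) := by
  filter_upwards [hupper, hcoer] with x hup hco
  rcases eq_or_ne (f x) 0 with h0 | hne
  · simp only [h0, inner_zero_left, mul_zero, abs_zero]
    positivity
  have hσpos := pos_of_coercive hc hco hne
  calc |σ x ‖f x‖ * ⟪f x, v x⟫| = σ x ‖f x‖ * |⟪f x, v x⟫| := by
        rw [abs_mul, abs_of_pos hσpos]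
    _ ≤ σ x ‖f x‖ * (‖f x‖ * ‖v x‖) := by gcongr; exact abs_real_inner_le_norm _ _
    _ ≤ σu * max 1 ((‖f x‖ / E₀) ^ (p - 2)) * (‖f x‖ * ‖v x‖) := by
        gcongr; exact hup _ (norm_pos_iff.2 hne)
    _ = σu * (‖f x‖ * max 1 ((‖f x‖ / E₀) ^ (p - 2))) * ‖v x‖ := by ring
    _ ≤ σu * (‖f x‖ + E₀ ^ (2 - p) * ‖f x‖ ^ (p - 1)) * ‖v x‖ := by
        gcongr; exact mul_max_one_div_rpow_le (norm_nonneg _) hE₀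
    _ = σu * (‖f x‖ * ‖v x‖ + E₀ ^ (2 - p) * (‖f x‖ ^ (p - 1) * ‖v x‖)) := by ring

variable (hp : 1 < p) (hf2 : MemLp f 2 μ) (hfp : MemLp f (.ofReal p) μ)
  (hv2 : MemLp v 2 μ) (hvp : MemLp v (.ofReal p) μ)
include hp hf2 hfp hv2 hvp

theorem integrable_mul_inner (hσ : Measurable (Function.uncurry σ)) :
    Integrable (fun x => σ x ‖f x‖ * ⟪f x, v x⟫) μ := by
  have hmajorant : Integrable
      (fun x => σu * (‖f x‖ * ‖v x‖ + E₀ ^ (2 - p) * (‖f x‖ ^ (p - 1) * ‖v x‖))) μ :=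
    ((hf2.integrable_norm_mul_norm hv2).add
      ((hfp.integrable_norm_rpow_sub_one_mul_norm hp hvp).const_mul _)).const_mul _
  have hmeas : AEStronglyMeasurable (fun x => σ x ‖f x‖ * ⟪f x, v x⟫) μ :=
    ((hσ.comp_aemeasurable (aemeasurable_id.prodMk hf2.1.norm.aemeasurable)).mul
      (hf2.1.inner hv2.1).aemeasurable).aestronglyMeasurable
  refine hmajorant.mono' hmeas ?_
  simpa only [Real.norm_eq_abs] using ae_abs_mul_inner_le hσu hE₀ hupper hc hcoer f v

theorem abs_integral_mul_inner_le :
    |∫ x, σ x ‖f x‖ * ⟪f x, v x⟫ ∂μ|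
      ≤ σu * ((eLpNorm f 2 μ).toReal * (eLpNorm v 2 μ).toReal
        + E₀ ^ (2 - p) * ((eLpNorm f (.ofReal p) μ).toReal ^ (p - 1)
          * (eLpNorm v (.ofReal p) μ).toReal)) := by
  have hint₂ := hf2.integrable_norm_mul_norm hv2
  have hintp := hfp.integrable_norm_rpow_sub_one_mul_norm hp hvp
  calc |∫ x, σ x ‖f x‖ * ⟪f x, v x⟫ ∂μ| ≤ ∫ x, |σ x ‖f x‖ * ⟪f x, v x⟫| ∂μ :=
        abs_integral_le_integral_abs
    _ ≤ ∫ x, σu * (‖f x‖ * ‖v x‖ + E₀ ^ (2 - p) * (‖f x‖ ^ (p - 1) * ‖v x‖)) ∂μ :=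
        integral_mono_of_nonneg (.of_forall fun _ => abs_nonneg _)
          ((hint₂.add (hintp.const_mul _)).const_mul _)
          (ae_abs_mul_inner_le hσu hE₀ hupper hc hcoer f v)
    _ = σu * (∫ x, ‖f x‖ * ‖v x‖ ∂μ + E₀ ^ (2 - p) * ∫ x, ‖f x‖ ^ (p - 1) * ‖v x‖ ∂μ) := by
        rw [integral_const_mul, integral_add hint₂ (hintp.const_mul _), integral_const_mul]
    _ ≤ _ := by
        gcongr
        · exact integral_norm_mul_norm_le hf2 hv2
        · exact integral_norm_rpow_sub_one_mul_norm_le hp hfp hvp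

end Flux

end MeasureTheory

theorem key_quantitative_estimate_general
    {n : ℕ} (Ω : Set (EuclideanSpace ℝ (Fin n)))
    (p : ℝ) (hp : 2 ≤ p)
    (σ : EuclideanSpace ℝ (Fin n) → ℝ → ℝ)
    (hσmeas : Measurable (Function.uncurry σ))
    -- upper bound in (H4)
    (σu E₀ : ℝ) (hσu : 0 < σu) (hE₀ : 0 < E₀)
    (hupper : ∀ᵐ x ∂(volume.restrict Ω), ∀ E > (0:ℝ),
      σ x E ≤ σu * max 1 ((E / E₀) ^ (p - 2)))
    -- coercivity (H5)
    (c : ℝ) (hc : 0 < c)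
    (hcoer : ∀ᵐ x ∂(volume.restrict Ω), ∀ a b : EuclideanSpace ℝ (Fin n),
      c * ‖b - a‖ ^ p ≤ ⟪σ x ‖b‖ • b - σ x ‖a‖ • a, b - a⟫)
    -- u₀, u₁, φ weakly differentiable, gradients in L²(Ω) ∩ L^p(Ω)
    (u₀ u₁ φ : EuclideanSpace ℝ (Fin n) → ℝ)
    (hu₀L2 : MemLp (fun x => gradient u₀ x) 2 (volume.restrict Ω))
    (hu₀Lp : MemLp (fun x => gradient u₀ x) (ENNReal.ofReal p) (volume.restrict Ω))
    (hu₁L2 : MemLp (fun x => gradient u₁ x) 2 (volume.restrict Ω))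
    (hu₁Lp : MemLp (fun x => gradient u₁ x) (ENNReal.ofReal p) (volume.restrict Ω))
    (hφL2 : MemLp (fun x => gradient φ x) 2 (volume.restrict Ω))
    (hφLp : MemLp (fun x => gradient φ x) (ENNReal.ofReal p) (volume.restrict Ω))
    (ε : ℝ)
    -- the two weak-formulation identities
    (hweak₁ : ∫ x in Ω, σ x ‖gradient u₁ x‖ *
        ⟪gradient u₁ x, gradient u₁ x - gradient u₀ x - ε • gradient φ x⟫ = 0)
    (hweak₀ : ∫ x in Ω, σ x ‖gradient u₀ x‖ *
        ⟪gradient u₀ x, gradient u₁ x - gradient u₀ x - ε • gradient φ x⟫ = 0) :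
    c * (eLpNorm (fun x => gradient u₁ x - gradient u₀ x)
          (ENNReal.ofReal p) (volume.restrict Ω)).toReal ^ p
      ≤ |ε| * σu *
        ((eLpNorm (fun x => gradient φ x) 2 (volume.restrict Ω)).toReal *
            ((eLpNorm (fun x => gradient u₁ x) 2 (volume.restrict Ω)).toReal +
              (eLpNorm (fun x => gradient u₀ x) 2 (volume.restrict Ω)).toReal) +
          E₀ ^ (2 - p) *
            (eLpNorm (fun x => gradient φ x) (ENNReal.ofReal p) (volume.restrict Ω)).toReal *
            ((eLpNorm (fun x => gradient u₁ x) (ENNReal.ofReal p)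
                (volume.restrict Ω)).toReal ^ (p - 1) +
              (eLpNorm (fun x => gradient u₀ x) (ENNReal.ofReal p)
                (volume.restrict Ω)).toReal ^ (p - 1))) := by
  have hp₁ : 1 < p := by linarith
  set μ := volume.restrict Ω
  have hd2 : MemLp (fun x => gradient u₁ x - gradient u₀ x) 2 μ := hu₁L2.sub hu₀L2
  have hdp : MemLp (fun x => gradient u₁ x - gradient u₀ x) (.ofReal p) μ := hu₁Lp.sub hu₀Lp
  have hw2 : MemLp (fun x => gradient u₁ x - gradient u₀ x - ε • gradient φ x) 2 μ :=
    hd2.sub (hφL2.const_smul ε)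
  have hwp : MemLp (fun x => gradient u₁ x - gradient u₀ x - ε • gradient φ x) (.ofReal p) μ :=
    hdp.sub (hφLp.const_smul ε)
  have integrable {f v : EuclideanSpace ℝ (Fin n) → EuclideanSpace ℝ (Fin n)} hf2 hfp hv2 hvp :=
    integrable_mul_inner (f := f) (v := v) hσu.le hE₀ hupper hc hcoer hp₁ hf2 hfp hv2 hvp hσmeas
  have bound {f v : EuclideanSpace ℝ (Fin n) → EuclideanSpace ℝ (Fin n)} :=
    abs_integral_mul_inner_le (f := f) (v := v) hσu.le hE₀ hupper hc hcoer hp₁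
  have h₁ := integral_mul_inner_eq_of_integral_mul_inner_sub_smul_eq_zero ε
    (integrable hu₁L2 hu₁Lp hw2 hwp) (integrable hu₁L2 hu₁Lp hφL2 hφLp) hweak₁
  have h₀ := integral_mul_inner_eq_of_integral_mul_inner_sub_smul_eq_zero ε
    (integrable hu₀L2 hu₀Lp hw2 hwp) (integrable hu₀L2 hu₀Lp hφL2 hφLp) hweak₀
  have hdp_int : Integrable (fun x => ‖gradient u₁ x - gradient u₀ x‖ ^ p) μ := by
    simpa only [ENNReal.toReal_ofReal (by linarith : 0 ≤ p)] using
      hdp.integrable_norm_rpow (ENNReal.ofReal_pos.2 (by linarith)).ne' ENNReal.ofReal_ne_top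
  set A := ∫ x, σ x ‖gradient u₁ x‖ * ⟪gradient u₁ x, gradient φ x⟫ ∂μ
  set B := ∫ x, σ x ‖gradient u₀ x‖ * ⟪gradient u₀ x, gradient φ x⟫ ∂μ
  calc c * (eLpNorm (fun x => gradient u₁ x - gradient u₀ x) (.ofReal p) μ).toReal ^ p
      = c * ∫ x, ‖gradient u₁ x - gradient u₀ x‖ ^ p ∂μ := by
        rw [toReal_eLpNorm_ofReal_rpow (by positivity) hdp.1]
    _ ≤ ε * A - ε * B := by
        rw [← h₁, ← h₀]
        exact mul_integral_norm_sub_rpow_le hcoer hdp_int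
          (integrable hu₁L2 hu₁Lp hd2 hdp) (integrable hu₀L2 hu₀Lp hd2 hdp)
    _ ≤ |ε| * (|A| + |B|) := by
        rw [← mul_sub]
        exact (le_abs_self _).trans (by rw [abs_mul]; gcongr; exact abs_sub _ _)
    _ ≤ _ := by
        grw [bound hu₁L2 hu₁Lp hφL2 hφLp, bound hu₀L2 hu₀Lp hφL2 hφLp]
        exact le_of_eq (by ring)

/-- **Key quantitative estimate in the proof of Lemma 3.1**: if `u₁` and `u₀` are weak
solutions tested against `u₁ − u₀ − εφ`, then
`c·‖∇u₁ − ∇u₀‖_p^p ≤ |ε|·σ̄·[‖∇φ‖₂(‖∇u₁‖₂+‖∇u₀‖₂) + E₀^{2−p}‖∇φ‖_p(‖∇u₁‖_p^{p−1}+‖∇u₀‖_p^{p−1})]`. -/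
theorem key_quantitative_estimate
    {n : ℕ} (Ω : Set (EuclideanSpace ℝ (Fin n)))
    (hΩo : IsOpen Ω) (hΩb : Bornology.IsBounded Ω)
    (p : ℝ) (hp : 2 ≤ p)
    (σ : EuclideanSpace ℝ (Fin n) → ℝ → ℝ)
    (hσmeas : Measurable (Function.uncurry σ))
    -- upper bound in (H4)
    (σu E₀ : ℝ) (hσu : 0 < σu) (hE₀ : 0 < E₀)
    (hupper : ∀ᵐ x ∂(volume.restrict Ω), ∀ E > (0:ℝ),
      σ x E ≤ σu * max 1 ((E / E₀) ^ (p - 2)))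
    -- coercivity (H5)
    (c : ℝ) (hc : 0 < c)
    (hcoer : ∀ᵐ x ∂(volume.restrict Ω), ∀ a b : EuclideanSpace ℝ (Fin n),
      c * ‖b - a‖ ^ p ≤ ⟪σ x ‖b‖ • b - σ x ‖a‖ • a, b - a⟫)
    -- u₀, u₁, φ weakly differentiable, gradients in L²(Ω) ∩ L^p(Ω)
    (u₀ u₁ φ : EuclideanSpace ℝ (Fin n) → ℝ)
    (hu₀ : Differentiable ℝ u₀) (hu₁ : Differentiable ℝ u₁) (hφ : Differentiable ℝ φ)
    (hu₀L2 : MemLp (fun x => gradient u₀ x) 2 (volume.restrict Ω))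
    (hu₀Lp : MemLp (fun x => gradient u₀ x) (ENNReal.ofReal p) (volume.restrict Ω))
    (hu₁L2 : MemLp (fun x => gradient u₁ x) 2 (volume.restrict Ω))
    (hu₁Lp : MemLp (fun x => gradient u₁ x) (ENNReal.ofReal p) (volume.restrict Ω))
    (hφL2 : MemLp (fun x => gradient φ x) 2 (volume.restrict Ω))
    (hφLp : MemLp (fun x => gradient φ x) (ENNReal.ofReal p) (volume.restrict Ω))
    (ε : ℝ)
    -- the two weak-formulation identities
    (hweak₁ : ∫ x in Ω, σ x ‖gradient u₁ x‖ *
        ⟪gradient u₁ x, gradient u₁ x - gradient u₀ x - ε • gradient φ x⟫ = 0)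
    (hweak₀ : ∫ x in Ω, σ x ‖gradient u₀ x‖ *
        ⟪gradient u₀ x, gradient u₁ x - gradient u₀ x - ε • gradient φ x⟫ = 0) :
    c * (eLpNorm (fun x => gradient u₁ x - gradient u₀ x)
          (ENNReal.ofReal p) (volume.restrict Ω)).toReal ^ p
      ≤ |ε| * σu *
        ((eLpNorm (fun x => gradient φ x) 2 (volume.restrict Ω)).toReal *
            ((eLpNorm (fun x => gradient u₁ x) 2 (volume.restrict Ω)).toReal +
              (eLpNorm (fun x => gradient u₀ x) 2 (volume.restrict Ω)).toReal) +
          E₀ ^ (2 - p) *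
            (eLpNorm (fun x => gradient φ x) (ENNReal.ofReal p) (volume.restrict Ω)).toReal *
            ((eLpNorm (fun x => gradient u₁ x) (ENNReal.ofReal p)
                (volume.restrict Ω)).toReal ^ (p - 1) +
              (eLpNorm (fun x => gradient u₀ x) (ENNReal.ofReal p)
                (volume.restrict Ω)).toReal ^ (p - 1))) :=
  key_quantitative_estimate_general Ω p hp σ hσmeas σu E₀ hσu hE₀ hupper c hc hcoer u₀ u₁ φ hu₀L2
    hu₀Lp hu₁L2 hu₁Lp hφL2 hφLp ε hweak₁ hweak₀
end

section
/- For every real k ≥ 0 and all vectors a, b ∈ ℝⁿ (with the Euclidean inner product and norm), one has (‖b‖^k·b − ‖a‖^k·a) · (b − a) ≥ 2^{−(k+1)}·‖b − a‖^{k+2}. -/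
open scoped RealInnerProductSpace

/-- **The vector inequality (eq. (trivial_p))**: for every real `k ≥ 0` and all
`a, b ∈ ℝⁿ`, `(‖b‖^k·b − ‖a‖^k·a)·(b − a) ≥ 2^{−(k+1)}·‖b − a‖^{k+2}`. -/
theorem vector_inequality_monomial
    {n : ℕ} (k : ℝ) (hk : 0 ≤ k) (a b : EuclideanSpace ℝ (Fin n)) :
    (2:ℝ) ^ (-(k + 1)) * ‖b - a‖ ^ (k + 2) ≤ ⟪‖b‖ ^ k • b - ‖a‖ ^ k • a, b - a⟫ := by
  rcases eq_or_ne b a with rfl | hne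
  · simp [Real.zero_rpow (by positivity : k + 2 ≠ 0)]
  set A := ‖a‖ with hA
  set B := ‖b‖ with hB
  set D := ‖b - a‖ with hD
  have hDpos : 0 < D := by
    simpa [hD] using (norm_pos_iff.mpr (sub_ne_zero.mpr hne))
  have hAnn : 0 ≤ A := norm_nonneg _
  have hBnn : 0 ≤ B := norm_nonneg _
  have hAk : 0 ≤ A ^ k := Real.rpow_nonneg hAnn k
  have hBk : 0 ≤ B ^ k := Real.rpow_nonneg hBnn k
  -- D^k ≤ 2^k * (A^k + B^k)
  have h1 : D ≤ 2 * max A B := by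
    have := norm_sub_le b a
    have h2 := le_max_left A B
    have h3 := le_max_right A B
    simp only [hD, hA, hB] at *
    linarith
  have h2 : D ^ k ≤ (2:ℝ) ^ k * (A ^ k + B ^ k) := by
    have e1 : D ^ k ≤ (2 * max A B) ^ k :=
      Real.rpow_le_rpow hDpos.le h1 hk
    have e2 : (2 * max A B) ^ k = (2:ℝ) ^ k * (max A B) ^ k :=
      Real.mul_rpow (by norm_num) (le_max_of_le_left hAnn)
    have e3 : (max A B) ^ k ≤ A ^ k + B ^ k := by
      rcases max_cases A B with ⟨h, _⟩ | ⟨h, _⟩ <;> rw [h] <;> linarith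
    calc D ^ k ≤ (2 * max A B) ^ k := e1
      _ = (2:ℝ) ^ k * (max A B) ^ k := e2
      _ ≤ (2:ℝ) ^ k * (A ^ k + B ^ k) := by
          have h2k : (0:ℝ) ≤ (2:ℝ) ^ k := Real.rpow_nonneg (by norm_num) k
          nlinarith
  -- split exponent
  have hsplit : D ^ (k + 2) = D ^ k * D ^ (2:ℕ) := by
    rw [Real.rpow_add hDpos]
    norm_num [Real.rpow_two]
  -- 2^(-(k+1)) * 2^k = 1/2
  have hpow : (2:ℝ) ^ (-(k + 1)) * (2:ℝ) ^ k = 1 / 2 := by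
    rw [← Real.rpow_add (by norm_num : (0:ℝ) < 2)]
    norm_num
  have h2negpos : (0:ℝ) < (2:ℝ) ^ (-(k + 1)) := Real.rpow_pos_of_pos (by norm_num) _
  -- key monotonicity
  have hmono : 0 ≤ (B ^ k - A ^ k) * (B ^ (2:ℕ) - A ^ (2:ℕ)) := by
    rcases le_total A B with h | h
    · have h1 := Real.rpow_le_rpow hAnn h hk
      have h2 : A ^ (2:ℕ) ≤ B ^ (2:ℕ) := pow_le_pow_left₀ hAnn h 2
      nlinarith
    · have h1 := Real.rpow_le_rpow hBnn h hk
      have h2 : B ^ (2:ℕ) ≤ A ^ (2:ℕ) := pow_le_pow_left₀ hBnn h 2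
      nlinarith
  -- expand the inner product
  have hinner : ⟪B ^ k • b - A ^ k • a, b - a⟫ =
      B ^ k * B ^ (2:ℕ) + A ^ k * A ^ (2:ℕ) - (A ^ k + B ^ k) * ⟪a, b⟫ := by
    simp only [inner_sub_left, inner_sub_right, real_inner_smul_left,
      real_inner_self_eq_norm_sq, real_inner_comm a b]
    ring
  have hnorm : D ^ (2:ℕ) = A ^ (2:ℕ) + B ^ (2:ℕ) - 2 * ⟪a, b⟫ := by
    have h := @norm_sub_sq_real (EuclideanSpace ℝ (Fin n)) _ _ b a
    have hc : (⟪b, a⟫ : ℝ) = ⟪a, b⟫ := real_inner_comm a b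
    rw [← hD, ← hA, ← hB, hc] at h
    linarith
  have hDsq : 0 ≤ D ^ (2:ℕ) := sq_nonneg D
  have key : (2:ℝ) ^ (-(k + 1)) * (D ^ k * D ^ (2:ℕ)) ≤
      1 / 2 * ((A ^ k + B ^ k) * D ^ (2:ℕ)) := by
    calc (2:ℝ) ^ (-(k + 1)) * (D ^ k * D ^ (2:ℕ))
        = ((2:ℝ) ^ (-(k + 1)) * D ^ k) * D ^ (2:ℕ) := by ring
      _ ≤ ((2:ℝ) ^ (-(k + 1)) * ((2:ℝ) ^ k * (A ^ k + B ^ k))) * D ^ (2:ℕ) :=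
          mul_le_mul_of_nonneg_right (mul_le_mul_of_nonneg_left h2 h2negpos.le) hDsq
      _ = ((2:ℝ) ^ (-(k + 1)) * (2:ℝ) ^ k) * ((A ^ k + B ^ k) * D ^ (2:ℕ)) := by ring
      _ = 1 / 2 * ((A ^ k + B ^ k) * D ^ (2:ℕ)) := by rw [hpow]
  have key2 : 1 / 2 * ((A ^ k + B ^ k) * D ^ (2:ℕ)) ≤
      ⟪B ^ k • b - A ^ k • a, b - a⟫ := by
    rw [hinner, hnorm]
    nlinarith [hmono]
  rw [hsplit]
  linarith
end

section
/- Let N ∈ ℕ, let θ₀, …, θ_N be nonnegative real numbers with θ_N ≥ c for some c > 0, and define σ(E) := Σ_{k=0}^{N} θ_k·E^k for E ≥ 0. Then for all vectors a, b ∈ ℝⁿ one has (σ(‖b‖)·b − σ(‖a‖)·a) · (b − a) ≥ (c / 2^{N+1})·‖b − a‖^{N+2}. (The verification that polynomial electrical conductivities satisfy hypothesis (H5) with p = N + 2.) -/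
open scoped RealInnerProductSpace

/-! Write `t = ‖b‖`, `s = ‖a‖`, `d = ‖b - a‖`. Eliminating `⟪a, b⟫` by the polarization identity,
`⟪σ(t) b - σ(s) a, b - a⟫ = (σ(t) + σ(s))/2 · d² + (σ(t) - σ(s))(t² - s²)/2`, and the second term is
nonnegative because `σ` is nondecreasing on `[0, ∞)`. Keeping only the leading term of `σ` and using
`d ≤ t + s`, `(t + s)^N ≤ 2^N (t^N + s^N)` gives the bound `c/2^{N+1} · d^{N+2}`. -/

section InnerProduct

variable {E : Type*} [NormedAddCommGroup E] [InnerProductSpace ℝ E]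

theorem inner_smul_sub_smul_sub_eq (α β : ℝ) (a b : E) :
    ⟪α • b - β • a, b - a⟫ =
      (α + β) / 2 * ‖b - a‖ ^ 2 + (α - β) * (‖b‖ ^ 2 - ‖a‖ ^ 2) / 2 := by
  have hab : ⟪a, b⟫ = (‖b‖ ^ 2 + ‖a‖ ^ 2 - ‖b - a‖ ^ 2) / 2 := by
    rw [norm_sub_sq_real b a, real_inner_comm]; ring
  rw [inner_sub_left, inner_sub_right, inner_sub_right, real_inner_smul_left,
    real_inner_smul_left, real_inner_smul_left, real_inner_smul_left,
    real_inner_self_eq_norm_sq, real_inner_self_eq_norm_sq, real_inner_comm a b, hab]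
  ring

theorem mul_norm_sub_sq_le_inner_of_monotoneOn {σ : ℝ → ℝ} (hσ : MonotoneOn σ (Set.Ici 0))
    (a b : E) :
    (σ ‖b‖ + σ ‖a‖) / 2 * ‖b - a‖ ^ 2 ≤ ⟪σ ‖b‖ • b - σ ‖a‖ • a, b - a⟫ := by
  have hmono : 0 ≤ (σ ‖b‖ - σ ‖a‖) * (‖b‖ ^ 2 - ‖a‖ ^ 2) := by
    have ha : ‖a‖ ∈ Set.Ici (0 : ℝ) := norm_nonneg a
    have hb : ‖b‖ ∈ Set.Ici (0 : ℝ) := norm_nonneg b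
    rcases le_total ‖a‖ ‖b‖ with h | h
    · exact mul_nonneg (sub_nonneg.2 (hσ ha hb h))
        (sub_nonneg.2 (pow_le_pow_left₀ (norm_nonneg a) h 2))
    · exact mul_nonneg_of_nonpos_of_nonpos (sub_nonpos.2 (hσ hb ha h))
        (sub_nonpos.2 (pow_le_pow_left₀ (norm_nonneg b) h 2))
  rw [inner_smul_sub_smul_sub_eq]
  linarith

end InnerProduct

section Polynomial

variable {s : Finset ℕ} {θ : ℕ → ℝ}

theorem monotoneOn_sum_mul_pow (hθ : ∀ k ∈ s, 0 ≤ θ k) :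
    MonotoneOn (fun E : ℝ => ∑ k ∈ s, θ k * E ^ k) (Set.Ici 0) := by
  intro x hx y _ hxy
  exact Finset.sum_le_sum fun k hk =>
    mul_le_mul_of_nonneg_left (pow_le_pow_left₀ hx hxy k) (hθ k hk)

theorem mul_pow_le_sum_mul_pow (hθ : ∀ k ∈ s, 0 ≤ θ k) {N : ℕ} (hN : N ∈ s) {E : ℝ}
    (hE : 0 ≤ E) : θ N * E ^ N ≤ ∑ k ∈ s, θ k * E ^ k :=
  Finset.single_le_sum (f := fun k => θ k * E ^ k)
    (fun k hk => mul_nonneg (hθ k hk) (pow_nonneg hE k)) hN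

end Polynomial

theorem norm_sub_pow_le_two_pow_mul (N : ℕ) {E : Type*} [SeminormedAddCommGroup E] (a b : E) :
    ‖b - a‖ ^ N ≤ 2 ^ N * (‖b‖ ^ N + ‖a‖ ^ N) :=
  calc ‖b - a‖ ^ N ≤ (‖b‖ + ‖a‖) ^ N := pow_le_pow_left₀ (norm_nonneg _) (norm_sub_le b a) N
    _ ≤ 2 ^ (N - 1) * (‖b‖ ^ N + ‖a‖ ^ N) := add_pow_le (norm_nonneg b) (norm_nonneg a) N
    _ ≤ 2 ^ N * (‖b‖ ^ N + ‖a‖ ^ N) := by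
      gcongr
      exacts [one_le_two, Nat.sub_le N 1]

theorem polynomial_conductivity_H5_general
    {n : ℕ} (N : ℕ) (c : ℝ) (θ : ℕ → ℝ)
    (hθ : ∀ k ≤ N, 0 ≤ θ k) (hθN : c ≤ θ N)
    (a b : EuclideanSpace ℝ (Fin n)) :
    c / 2 ^ (N + 1) * ‖b - a‖ ^ (N + 2) ≤
      ⟪(∑ k ∈ Finset.range (N + 1), θ k * ‖b‖ ^ k) • b -
        (∑ k ∈ Finset.range (N + 1), θ k * ‖a‖ ^ k) • a, b - a⟫ := by
  set σ : ℝ → ℝ := fun E => ∑ k ∈ Finset.range (N + 1), θ k * E ^ k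
  have hθ' : ∀ k ∈ Finset.range (N + 1), 0 ≤ θ k := fun k hk =>
    hθ k (Finset.mem_range_succ_iff.1 hk)
  have hN := Finset.self_mem_range_succ N
  have hlead : θ N * (‖b‖ ^ N + ‖a‖ ^ N) ≤ σ ‖b‖ + σ ‖a‖ := by
    rw [mul_add]
    exact add_le_add (mul_pow_le_sum_mul_pow hθ' hN (norm_nonneg b))
      (mul_pow_le_sum_mul_pow hθ' hN (norm_nonneg a))
  refine le_trans ?_ (mul_norm_sub_sq_le_inner_of_monotoneOn (monotoneOn_sum_mul_pow hθ') a b)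
  calc c / 2 ^ (N + 1) * ‖b - a‖ ^ (N + 2)
      = c * ‖b - a‖ ^ N / 2 ^ N / 2 * ‖b - a‖ ^ 2 := by ring
    _ ≤ θ N * (‖b‖ ^ N + ‖a‖ ^ N) / 2 * ‖b - a‖ ^ 2 := by
      gcongr
      rw [div_le_iff₀ (by positivity)]
      calc c * ‖b - a‖ ^ N ≤ θ N * (2 ^ N * (‖b‖ ^ N + ‖a‖ ^ N)) :=
          mul_le_mul hθN (norm_sub_pow_le_two_pow_mul N a b) (by positivity) (hθ N le_rfl)
        _ = θ N * (‖b‖ ^ N + ‖a‖ ^ N) * 2 ^ N := by ring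
    _ ≤ (σ ‖b‖ + σ ‖a‖) / 2 * ‖b - a‖ ^ 2 :=
      mul_le_mul_of_nonneg_right (div_le_div_of_nonneg_right hlead zero_le_two) (sq_nonneg _)

/-- **Polynomial conductivities satisfy (H5) with `p = N + 2`**: if
`σ(E) = Σ_{k=0}^N θ_k E^k` with `θ_k ≥ 0` and `θ_N ≥ c > 0`, then for all `a, b ∈ ℝⁿ`,
`(σ(‖b‖)·b − σ(‖a‖)·a)·(b − a) ≥ (c/2^{N+1})·‖b − a‖^{N+2}`. -/
theorem polynomial_conductivity_H5
    {n : ℕ} (N : ℕ) (c : ℝ) (hc : 0 < c) (θ : ℕ → ℝ)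
    (hθ : ∀ k ≤ N, 0 ≤ θ k) (hθN : c ≤ θ N)
    (a b : EuclideanSpace ℝ (Fin n)) :
    c / 2 ^ (N + 1) * ‖b - a‖ ^ (N + 2) ≤
      ⟪(∑ k ∈ Finset.range (N + 1), θ k * ‖b‖ ^ k) • b -
        (∑ k ∈ Finset.range (N + 1), θ k * ‖a‖ ^ k) • a, b - a⟫ :=
  polynomial_conductivity_H5_general N c θ hθ hθN a b
end
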